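/- arXiv:0908.0345 — 3 statements merged into one kernel-verified Lean document; each statement's English description precedes it below -/
import Mathlib

section
/- For every n ≥ 1 and all symmetric functions f, g, we have f · h_n^⊥(g) = Σ_{k=0}^{n} (−1)^k h_{n−k}^⊥(e_k^⊥(f) · g) in the ring of symmetric functions. -/
open scoped Classical

noncomputable section

/-- The ring of symmetric functions over `ℚ`, presented as the polynomial ring
`ℚ[p_1, p_2, …]` in the power-sum generators: variable `n` stands for the
power sum `p_{n+1}`. -/
abbrev SymFn : Type := MvPolynomial ℕ ℚ

/-- The power-sum monomial `p_λ` corresponding to an exponent vector `d`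
(`d n` copies of `p_{n+1}`). -/
def pmon (d : ℕ →₀ ℕ) : SymFn := MvPolynomial.monomial d 1

/-- The quantity `z_λ = ∏ i^{m_i} · m_i!` for the partition `λ` with `d n`
parts equal to `n+1`. -/
def zWeight (d : ℕ →₀ ℕ) : ℚ := d.prod fun n k => ((n : ℚ) + 1) ^ k * (Nat.factorial k)

/-- The degree `|λ|` of the partition encoded by `d`. -/
def wdeg (d : ℕ →₀ ℕ) : ℕ := d.sum fun n k => (n + 1) * k

/-- The length `ℓ(λ)` of the partition encoded by `d`. -/
def plen (d : ℕ →₀ ℕ) : ℕ := d.sum fun _ k => k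

/-- The Hall inner product on `Λ`, determined by `⟨p_λ, p_μ⟩ = δ_{λμ} z_λ`
(equivalently, the one making the Schur functions orthonormal). -/
def hall (f g : SymFn) : ℚ :=
  ∑ d ∈ f.support, MvPolynomial.coeff d f * MvPolynomial.coeff d g * zWeight d

/-- `perp f g = f^⊥(g)`, the adjoint of multiplication by `f` with respect to
the Hall inner product, applied to `g`; it is characterized by expanding in the
orthogonal basis `p_λ`:  `f^⊥(g) = Σ_λ z_λ^{-1} ⟨f·p_λ, g⟩ p_λ`. -/
def perp (f g : SymFn) : SymFn :=
  ∑ᶠ d : ℕ →₀ ℕ, (hall (f * pmon d) g / zWeight d) • pmon d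

/-- The complete homogeneous symmetric function `h_n = Σ_{λ ⊢ n} z_λ^{-1} p_λ`. -/
def hΛ (n : ℕ) : SymFn :=
  ∑ᶠ (d : ℕ →₀ ℕ) (_ : wdeg d = n), (zWeight d)⁻¹ • pmon d

/-- The elementary symmetric function
`e_n = Σ_{λ ⊢ n} (−1)^{n − ℓ(λ)} z_λ^{-1} p_λ`. -/
def eΛ (n : ℕ) : SymFn :=
  ∑ᶠ (d : ℕ →₀ ℕ) (_ : wdeg d = n), ((-1 : ℚ) ^ (n - plen d) * (zWeight d)⁻¹) • pmon d

/-- A partition, given by its weakly decreasing, eventually zero sequence of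
parts. -/
def IsPartition (p : ℕ → ℕ) : Prop := Antitone p ∧ ∃ N, ∀ i, N ≤ i → p i = 0

/-- The empty partition. -/
def emptyShape : ℕ → ℕ := fun _ => 0

/-- Containment of partitions. -/
def SubShape (m l : ℕ → ℕ) : Prop := ∀ i, m i ≤ l i

/-- The skew Schur function `s_{λ/μ}` in `Λ`, via the Jacobi–Trudi determinant
`s_{λ/μ} = det(h_{λ_i − μ_j − i + j})_{0 ≤ i,j < N}`, where `N` is at least the
number of parts of `λ` and `h_k = 0` for `k < 0`. -/
def schurJT (l m : ℕ → ℕ) (N : ℕ) : SymFn :=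
  Matrix.det (Matrix.of fun i j : Fin N =>
    if l i + (j : ℕ) < m j + (i : ℕ) then 0 else hΛ (l i + (j : ℕ) - (m j + (i : ℕ))))

end

/-!
With `H(t) = Σ h_k t^k` and `E(t) = Σ e_k t^k`, in power-sum coordinates
`H(t) = exp(Σ p_k t^k / k)` and `E(-t) = exp(-Σ p_k t^k / k)`, so `E(-t) H(t) = 1`.
Since `p_k^⊥ = k ∂/∂p_k` is a derivation, Newton's identity `n h_n = Σ_k p_k h_{n-k}` yields
the coproduct rule `h_n^⊥(uv) = Σ_{i+j=n} h_i^⊥ u · h_j^⊥ v`. Expanding the right-hand side by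
this rule and collecting the terms containing `h_j^⊥ g`, their coefficient is
`(Σ_{i+k=n-j} (-1)^k e_k h_i)^⊥ f`, a coefficient of `E(-t) H(t)`, which vanishes unless `j = n`.

Both facts are instances of one principle: a solution of `(n+1) u_{n+1} = Σ_{m+k=n} T_m u_k`
is determined by `u_0`, and the convolution of two solutions is again a solution when the
operators obey a Leibniz rule.
-/

open Finset

section NewtonSeq

variable {M : Type*} [AddCommMonoid M]

def IsNewtonSeq (T : ℕ → M →+ M) (u : ℕ → M) : Prop :=
  ∀ n, (n + 1) • u (n + 1) = ∑ p ∈ antidiagonal n, T p.1 (u p.2)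

theorem IsNewtonSeq.eq [IsAddTorsionFree M] {T : ℕ → M →+ M} {u v : ℕ → M}
    (hu : IsNewtonSeq T u) (hv : IsNewtonSeq T v) (h0 : u 0 = v 0) : u = v := by
  funext n
  induction n using Nat.strong_induction_on with
  | _ n ih =>
    rcases n with _ | n
    · exact h0
    · refine IsAddTorsionFree.nsmul_right_injective n.succ_ne_zero ?_
      simp only [hu n, hv n]
      refine sum_congr rfl fun p hp => ?_
      rw [ih p.2 (Nat.antidiagonal.snd_lt hp)]

theorem Finset.Nat.sum_antidiagonal_sum_antidiagonal_assoc (n : ℕ) (f : ℕ → ℕ → ℕ → M) :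
    ∑ p ∈ antidiagonal n, ∑ q ∈ antidiagonal p.1, f q.1 q.2 p.2 =
      ∑ p ∈ antidiagonal n, ∑ q ∈ antidiagonal p.2, f p.1 q.1 q.2 := by
  simp only [sum_sigma']
  apply sum_nbij' (fun x => ⟨(x.2.1, x.2.2 + x.1.2), (x.2.2, x.1.2)⟩)
    (fun x => ⟨(x.1.1 + x.2.1, x.2.2), (x.1.1, x.2.1)⟩) <;>
    aesop (add simp [add_assoc])

variable {R : Type*} [Semiring R]

theorem IsNewtonSeq.convolution {α β δ : ℕ → R →+ R}
    (hδ : ∀ m x y, δ m (x * y) = α m x * y + x * β m y) {a b : ℕ → R}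
    (ha : IsNewtonSeq α a) (hb : IsNewtonSeq β b) :
    IsNewtonSeq δ fun n => ∑ p ∈ antidiagonal n, a p.1 * b p.2 := by
  intro n
  have hsplit : ∀ p ∈ antidiagonal (n + 1),
      (n + 1) • (a p.1 * b p.2) = (p.1 • a p.1) * b p.2 + a p.1 * (p.2 • b p.2) := by
    intro p hp
    rw [← mem_antidiagonal.1 hp, add_nsmul, smul_mul_assoc, mul_smul_comm]
  rw [smul_sum, sum_congr rfl hsplit, sum_add_distrib, Nat.sum_antidiagonal_succ,
    Nat.sum_antidiagonal_succ']
  simp only [zero_smul, zero_mul, mul_zero, zero_add, ha _, hb _, sum_mul, mul_sum,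
    map_sum, hδ, sum_add_distrib]
  rw [Nat.sum_antidiagonal_sum_antidiagonal_assoc (f := fun m l j => α m (a l) * b j)]
  congr 1
  rw [← Nat.sum_antidiagonal_sum_antidiagonal_assoc (f := fun l m j => a l * β m (b j)),
    ← Nat.sum_antidiagonal_sum_antidiagonal_assoc (f := fun m l j => a l * β m (b j))]
  exact sum_congr rfl fun p _ => Nat.sum_antidiagonal_swap.symm

end NewtonSeq

open MvPolynomial

section Partitions

theorem zWeight_pos (d : ℕ →₀ ℕ) : 0 < zWeight d :=
  prod_pos fun _ _ => by positivity

theorem zWeight_add_single (d : ℕ →₀ ℕ) (m : ℕ) :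
    zWeight (d + Finsupp.single m 1) = zWeight d * ((m + 1) * (d m + 1)) := by
  have hg : ∀ i : ℕ, ((i : ℚ) + 1) ^ 0 * (Nat.factorial 0 : ℚ) = 1 := by simp
  rw [zWeight, zWeight, ← Finsupp.mul_prod_erase' _ m _ hg, ← Finsupp.mul_prod_erase' d m _ hg,
    Finsupp.erase_add, Finsupp.erase_single, add_zero]
  simp only [Finsupp.add_apply, Finsupp.single_eq_same, pow_succ, Nat.factorial_succ]
  push_cast
  ring

theorem wdeg_add (a b : ℕ →₀ ℕ) : wdeg (a + b) = wdeg a + wdeg b :=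
  Finsupp.sum_add_index' (fun _ => by simp) fun _ _ _ => by ring

theorem plen_add (a b : ℕ →₀ ℕ) : plen (a + b) = plen a + plen b :=
  Finsupp.sum_add_index' (fun _ => rfl) fun _ _ _ => rfl

theorem wdeg_single (m k : ℕ) : wdeg (Finsupp.single m k) = (m + 1) * k :=
  Finsupp.sum_single_index (by simp)

theorem plen_single (m k : ℕ) : plen (Finsupp.single m k) = k :=
  Finsupp.sum_single_index rfl

theorem plen_le_wdeg (d : ℕ →₀ ℕ) : plen d ≤ wdeg d :=
  sum_le_sum fun i _ => Nat.le_mul_of_pos_left _ i.succ_pos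

theorem mul_apply_le_wdeg (d : ℕ →₀ ℕ) (m : ℕ) : (m + 1) * d m ≤ wdeg d := by
  by_cases hm : m ∈ d.support
  · exact single_le_sum (f := fun a => (a + 1) * d a) (fun _ _ => Nat.zero_le _) hm
  · simp [Finsupp.notMem_support_iff.1 hm]

theorem support_subset_range_wdeg (d : ℕ →₀ ℕ) : d.support ⊆ range (wdeg d) := by
  intro m hm
  have := Nat.pos_of_ne_zero (Finsupp.mem_support_iff.1 hm)
  have := mul_apply_le_wdeg d m
  rw [mem_range]
  nlinarith

theorem wdeg_eq_sum_range (d : ℕ →₀ ℕ) : wdeg d = ∑ m ∈ range (wdeg d), (m + 1) * d m :=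
  Finsupp.sum_of_support_subset d (support_subset_range_wdeg d) _ fun _ _ => mul_zero _

theorem wdeg_eq_zero_iff {d : ℕ →₀ ℕ} : wdeg d = 0 ↔ d = 0 := by
  refine ⟨fun h => Finsupp.ext fun m => ?_, fun h => by simp [h, wdeg]⟩
  have := mul_apply_le_wdeg d m
  simp_all

theorem finite_setOf_wdeg_eq (n : ℕ) : {d : ℕ →₀ ℕ | wdeg d = n}.Finite := by
  refine ((range n).finsupp fun _ => range (n + 1)).finite_toSet.subset
    fun d (hd : wdeg d = n) => ?_
  rw [mem_coe, mem_finsupp_iff]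
  refine ⟨hd ▸ support_subset_range_wdeg d, fun m _ => mem_range.2 ?_⟩
  nlinarith [mul_apply_le_wdeg d m]

end Partitions

section Hall

theorem coeff_pmon (e d : ℕ →₀ ℕ) : coeff e (pmon d) = if d = e then 1 else 0 :=
  coeff_monomial e d 1

theorem monomial_eq_smul_pmon (d : ℕ →₀ ℕ) (a : ℚ) : monomial d a = a • pmon d := by
  rw [pmon, smul_monomial, smul_eq_mul, mul_one]

theorem hall_eq_sum_of_subset {f : SymFn} (g : SymFn) {s : Finset (ℕ →₀ ℕ)}
    (h : f.support ⊆ s) : hall f g = ∑ d ∈ s, coeff d f * coeff d g * zWeight d :=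
  sum_subset h fun d _ hd => by simp [notMem_support_iff.1 hd]

theorem hall_comm (f g : SymFn) : hall f g = hall g f := by
  rw [hall_eq_sum_of_subset g (subset_union_left (s₂ := g.support)),
    hall_eq_sum_of_subset f (subset_union_right (s₁ := f.support))]
  exact sum_congr rfl fun d _ => by ring

theorem hall_add_right (f g₁ g₂ : SymFn) : hall f (g₁ + g₂) = hall f g₁ + hall f g₂ := by
  simp only [hall, coeff_add, mul_add, add_mul, sum_add_distrib]

theorem hall_smul_right (a : ℚ) (f g : SymFn) : hall f (a • g) = a * hall f g := by
  simp only [hall, coeff_smul, smul_eq_mul, mul_sum]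
  exact sum_congr rfl fun d _ => by ring

theorem hall_add_left (f₁ f₂ g : SymFn) : hall (f₁ + f₂) g = hall f₁ g + hall f₂ g := by
  rw [hall_comm, hall_add_right, hall_comm g, hall_comm g]

theorem hall_smul_left (a : ℚ) (f g : SymFn) : hall (a • f) g = a * hall f g := by
  rw [hall_comm, hall_smul_right, hall_comm]

theorem hall_pmon_right (f : SymFn) (d : ℕ →₀ ℕ) : hall f (pmon d) = coeff d f * zWeight d := by
  simp only [hall, coeff_pmon, mul_ite, mul_one, mul_zero, ite_mul, zero_mul, sum_ite_eq,
    mem_support_iff]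
  split_ifs with h
  · rfl
  · rw [not_not.1 h, zero_mul]

theorem hall_pmon_left (d : ℕ →₀ ℕ) (g : SymFn) : hall (pmon d) g = coeff d g * zWeight d := by
  rw [hall_comm, hall_pmon_right]

end Hall

section Perp

theorem finite_support_perp_summand (f g : SymFn) :
    (Function.support fun d => (hall (f * pmon d) g / zWeight d) • pmon d).Finite := by
  refine (g.support.finite_toSet.biUnion fun e _ => Set.finite_Iic e).subset ?_
  intro d hd
  obtain ⟨e, -, hne⟩ :=
    exists_ne_zero_of_sum_ne_zero (div_ne_zero_iff.1 (left_ne_zero_of_smul hd)).1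
  have hfe : coeff e (f * pmon d) ≠ 0 := left_ne_zero_of_mul (left_ne_zero_of_mul hne)
  rw [pmon, coeff_mul_monomial'] at hfe
  simp only [Set.mem_iUnion, Set.mem_Iic, Finset.mem_coe, mem_support_iff]
  exact ⟨e, right_ne_zero_of_mul (left_ne_zero_of_mul hne), by_contra fun h => hfe (if_neg h)⟩

theorem coeff_perp (f g : SymFn) (e : ℕ →₀ ℕ) :
    coeff e (perp f g) = hall (f * pmon e) g / zWeight e := by
  rw [perp, ← lcoeff_apply, map_finsum (lcoeff ℚ e) (finite_support_perp_summand f g),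
    finsum_eq_single _ e]
  · simp [coeff_pmon]
  · intro d hd
    simp [coeff_pmon, hd]

theorem perp_add_left (f₁ f₂ g : SymFn) : perp (f₁ + f₂) g = perp f₁ g + perp f₂ g := by
  ext e
  simp only [coeff_add, coeff_perp, add_mul, hall_add_left, add_div]

theorem perp_smul_left (a : ℚ) (f g : SymFn) : perp (a • f) g = a • perp f g := by
  ext e
  simp only [coeff_smul, coeff_perp, smul_mul_assoc, hall_smul_left, smul_eq_mul, mul_div_assoc]

theorem perp_add_right (f g₁ g₂ : SymFn) : perp f (g₁ + g₂) = perp f g₁ + perp f g₂ := by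
  ext e
  simp only [coeff_add, coeff_perp, hall_add_right, add_div]

theorem perp_smul_right (a : ℚ) (f g : SymFn) : perp f (a • g) = a • perp f g := by
  ext e
  simp only [coeff_smul, coeff_perp, hall_smul_right, smul_eq_mul, mul_div_assoc]

noncomputable def perpₗ : SymFn →ₗ[ℚ] SymFn →ₗ[ℚ] SymFn :=
  LinearMap.mk₂ ℚ perp perp_add_left perp_smul_left perp_add_right perp_smul_right

theorem perpₗ_apply (f g : SymFn) : perpₗ f g = perp f g := rfl

theorem perp_zero_left (g : SymFn) : perp 0 g = 0 :=
  map_zero (perpₗ.flip g)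

theorem perp_sum_left {ι : Type*} (s : Finset ι) (F : ι → SymFn) (g : SymFn) :
    perp (∑ i ∈ s, F i) g = ∑ i ∈ s, perp (F i) g :=
  map_sum (perpₗ.flip g) F s

theorem hall_perp_right (u f g : SymFn) : hall u (perp f g) = hall (f * u) g := by
  induction u using MvPolynomial.induction_on' with
  | monomial d a =>
    rw [monomial_eq_smul_pmon, hall_smul_left, mul_smul_comm, hall_smul_left, hall_pmon_left,
      coeff_perp, div_mul_cancel₀ _ (zWeight_pos d).ne']
  | add u v hu hv => rw [hall_add_left, hu, hv, mul_add, hall_add_left]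

theorem perp_one (g : SymFn) : perp 1 g = g := by
  ext e
  rw [coeff_perp, one_mul, hall_pmon_left, mul_div_cancel_right₀ _ (zWeight_pos e).ne']

theorem perp_mul (f₁ f₂ g : SymFn) : perp (f₁ * f₂) g = perp f₁ (perp f₂ g) := by
  ext e
  rw [coeff_perp, coeff_perp, hall_perp_right, mul_comm f₁, mul_assoc]

theorem perp_X (m : ℕ) (g : SymFn) : perp (X m) g = ((m : ℚ) + 1) • pderiv m g := by
  ext e
  rw [coeff_perp, pmon, X, monomial_mul, one_mul, add_comm, ← pmon, hall_pmon_left,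
    zWeight_add_single, coeff_smul, coeff_pderiv, smul_eq_mul,
    div_eq_iff (zWeight_pos e).ne']
  ring

theorem perp_X_mul (m : ℕ) (u v : SymFn) :
    perp (X m) (u * v) = perp (X m) u * v + u * perp (X m) v := by
  rw [perp_X, perp_X, perp_X, Derivation.leibniz, smul_eq_mul, smul_eq_mul, smul_add,
    smul_mul_assoc, mul_smul_comm, mul_comm v, add_comm]

end Perp

section ScaledH

/-- The image of `h_n` under `p_k ↦ c p_k`; so `scaledH 1 n = h_n` and
`scaledH (-1) n = (-1)^n e_n`. -/
noncomputable def scaledH (c : ℚ) (n : ℕ) : SymFn :=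
  ∑ᶠ (d : ℕ →₀ ℕ) (_ : wdeg d = n), (c ^ plen d / zWeight d) • pmon d

theorem coeff_finsum_wdeg_eq (w : (ℕ →₀ ℕ) → ℚ) (n : ℕ) (e : ℕ →₀ ℕ) :
    coeff e (∑ᶠ (d : ℕ →₀ ℕ) (_ : wdeg d = n), w d • pmon d) =
      if wdeg e = n then w e else 0 := by
  rw [finsum_cond_eq_sum_of_cond_iff _ (t := (finite_setOf_wdeg_eq n).toFinset)
    fun _ => by simp, coeff_sum]
  simp [coeff_pmon]

theorem coeff_scaledH (c : ℚ) (n : ℕ) (e : ℕ →₀ ℕ) :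
    coeff e (scaledH c n) = if wdeg e = n then c ^ plen e / zWeight e else 0 :=
  coeff_finsum_wdeg_eq _ n e

theorem scaledH_one (n : ℕ) : scaledH 1 n = hΛ n := by
  ext e
  rw [coeff_scaledH, hΛ, coeff_finsum_wdeg_eq, one_pow, one_div]

theorem scaledH_neg_one (n : ℕ) : scaledH (-1) n = (-1 : ℚ) ^ n • eΛ n := by
  ext e
  rw [coeff_scaledH, coeff_smul, eΛ, coeff_finsum_wdeg_eq]
  split_ifs with h
  · subst h
    obtain ⟨k, hk⟩ := Nat.exists_eq_add_of_le (plen_le_wdeg e)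
    have hsq : ((-1 : ℚ) ^ k) ^ 2 = 1 := by rw [← pow_mul, pow_mul', neg_one_sq, one_pow]
    rw [hk, Nat.add_sub_cancel_left, smul_eq_mul, pow_add]
    linear_combination (-(-1 : ℚ) ^ plen e * (zWeight e)⁻¹) * hsq
  · rw [smul_zero]

theorem scaledH_zero (c : ℚ) : scaledH c 0 = 1 := by
  ext e
  rw [coeff_scaledH, coeff_one]
  by_cases h : e = 0
  · simp [h, plen, zWeight, wdeg]
  · simp [wdeg_eq_zero_iff, h, Ne.symm h]

theorem coeff_smul_X_mul_scaledH (c : ℚ) {m n : ℕ} (hm : m ≤ n) (e : ℕ →₀ ℕ) :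
    coeff e ((c • X m) * scaledH c (n - m)) =
      if wdeg e = n + 1 then ((m + 1) * e m) * (c ^ plen e / zWeight e) else 0 := by
  rw [smul_mul_assoc, mul_comm (X m), coeff_smul, smul_eq_mul]
  by_cases he : e m = 0
  · rw [coeff_mul_X', if_neg (Finsupp.notMem_support_iff.2 he), he]
    simp
  obtain ⟨d, rfl⟩ : ∃ d, e = d + Finsupp.single m 1 :=
    ⟨e - Finsupp.single m 1, (tsub_add_cancel_of_le (Finsupp.single_le_iff.2 (by omega))).symm⟩
  have hwdeg : wdeg (d + Finsupp.single m 1) = wdeg d + (m + 1) := by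
    rw [wdeg_add, wdeg_single, mul_one]
  rw [coeff_mul_X, coeff_scaledH, hwdeg, plen_add, plen_single, zWeight_add_single]
  simp only [Finsupp.add_apply, Finsupp.single_eq_same, Nat.cast_add, Nat.cast_one]
  by_cases hw : wdeg d = n - m
  · rw [if_pos hw, if_pos (by omega)]
    have := zWeight_pos d
    field_simp
    ring
  · rw [if_neg hw, if_neg (by omega), mul_zero]

theorem isNewtonSeq_scaledH (c : ℚ) :
    IsNewtonSeq (fun m => AddMonoidHom.mulLeft (c • X m)) (scaledH c) := by
  intro n
  ext e
  simp only [AddMonoidHom.coe_mulLeft, coeff_sum]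
  rw [Nat.sum_antidiagonal_eq_sum_range_succ (fun m k => coeff e ((c • X m) * scaledH c k)),
    sum_congr rfl fun m hm => coeff_smul_X_mul_scaledH c (Nat.lt_succ_iff.1 (mem_range.1 hm)) e,
    coeff_smul, coeff_scaledH]
  split_ifs with hw
  · rw [← sum_mul, nsmul_eq_mul]
    have hsum := wdeg_eq_sum_range e
    rw [hw] at hsum
    congr 1
    exact_mod_cast hsum
  · simp

end ScaledH

section Coproduct

theorem IsNewtonSeq.perp_left {y u : ℕ → SymFn}
    (hu : IsNewtonSeq (fun m => AddMonoidHom.mulLeft (y m)) u) (x : SymFn) :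
    IsNewtonSeq (fun m => (perpₗ (y m)).toAddMonoidHom) fun n => perp (u n) x := by
  intro n
  calc (n + 1) • perp (u (n + 1)) x = perpₗ.flip x ((n + 1) • u (n + 1)) :=
        (map_nsmul (perpₗ.flip x) _ _).symm
    _ = ∑ p ∈ antidiagonal n, perp (y p.1 * u p.2) x := by
        rw [hu n]
        exact perp_sum_left _ _ x
    _ = _ := by simp only [perp_mul]; rfl

theorem perp_scaledH_mul (c : ℚ) (n : ℕ) (u v : SymFn) :
    perp (scaledH c n) (u * v) =
      ∑ p ∈ antidiagonal n, perp (scaledH c p.1) u * perp (scaledH c p.2) v := by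
  have hder : ∀ m x y, perpₗ (c • X m) (x * y) =
      perpₗ (c • X m) x * y + x * perpₗ (c • X m) y := by
    intro m x y
    simp only [map_smul, LinearMap.smul_apply, perpₗ_apply, perp_X_mul, smul_add, smul_mul_assoc,
      mul_smul_comm]
  have hN := isNewtonSeq_scaledH c
  refine congrFun ((hN.perp_left (u * v)).eq
    ((hN.perp_left u).convolution hder (hN.perp_left v)) ?_) n
  simp [scaledH_zero, perp_one]

theorem sum_antidiagonal_scaledH_neg_mul_scaledH (c : ℚ) {n : ℕ} (hn : n ≠ 0) :
    ∑ p ∈ antidiagonal n, scaledH (-c) p.1 * scaledH c p.2 = 0 := by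
  obtain ⟨n, rfl⟩ := Nat.exists_eq_succ_of_ne_zero hn
  have h := (isNewtonSeq_scaledH (-c)).convolution (δ := 0) (fun m x y => ?_)
    (isNewtonSeq_scaledH c) n
  · simp only [Pi.zero_apply, AddMonoidHom.zero_apply, sum_const_zero] at h
    exact (smul_eq_zero.1 h).resolve_left n.succ_ne_zero
  · simp only [Pi.zero_apply, AddMonoidHom.zero_apply, AddMonoidHom.coe_mulLeft, neg_smul]
    ring

end Coproduct

theorem mul_perp_h_general (n : ℕ) (f g : SymFn) :
    f * perp (hΛ n) g =
      ∑ k ∈ Finset.range (n + 1),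
        (-1 : SymFn) ^ k * perp (hΛ (n - k)) (perp (eΛ k) f * g) := by
  simp only [← scaledH_one]
  have hsign : ∀ k, (-1 : SymFn) ^ k * perp (scaledH 1 (n - k)) (perp (eΛ k) f * g) =
      perp (scaledH 1 (n - k)) (perp (scaledH (-1) k) f * g) := fun k => by
    rw [scaledH_neg_one, perp_smul_left, smul_mul_assoc, perp_smul_right, Algebra.smul_def,
      map_pow, map_neg, map_one]
  calc f * perp (scaledH 1 n) g
      = ∑ p ∈ antidiagonal n, perp (∑ q ∈ antidiagonal p.1, scaledH (-1) q.1 * scaledH 1 q.2) f *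
          perp (scaledH 1 p.2) g := by
        rw [sum_eq_single (0, n) (fun p hp hne => ?_) (by simp)]
        · simp [scaledH_zero, perp_one]
        have hp1 : p.1 ≠ 0 := fun h => hne (Prod.ext h (by simpa [h] using mem_antidiagonal.1 hp))
        rw [sum_antidiagonal_scaledH_neg_mul_scaledH 1 hp1, perp_zero_left, zero_mul]
    _ = ∑ p ∈ antidiagonal n, ∑ q ∈ antidiagonal p.2,
          perp (scaledH 1 q.1) (perp (scaledH (-1) p.1) f) * perp (scaledH 1 q.2) g := by
        simp only [perp_sum_left, sum_mul]
        rw [Nat.sum_antidiagonal_sum_antidiagonal_assoc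
          (f := fun k i l => perp (scaledH (-1) k * scaledH 1 i) f * perp (scaledH 1 l) g)]
        refine sum_congr rfl fun p _ => sum_congr rfl fun q _ => ?_
        rw [mul_comm (scaledH (-1) _), perp_mul]
    _ = ∑ p ∈ antidiagonal n, perp (scaledH 1 p.2) (perp (scaledH (-1) p.1) f * g) := by
        simp only [perp_scaledH_mul]
    _ = _ := by
        rw [Nat.sum_antidiagonal_eq_sum_range_succ
          (fun k j => perp (scaledH 1 j) (perp (scaledH (-1) k) f * g))]
        exact sum_congr rfl fun k _ => (hsign k).symm

/-- For every `n ≥ 1` and all symmetric functions `f, g`,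
`f · h_n^⊥(g) = Σ_{k=0}^n (−1)^k h_{n−k}^⊥(e_k^⊥(f) · g)`. -/
theorem mul_perp_h (n : ℕ) (hn : 1 ≤ n) (f g : SymFn) :
    f * perp (hΛ n) g =
      ∑ k ∈ Finset.range (n + 1),
        (-1 : SymFn) ^ k * perp (hΛ (n - k)) (perp (eΛ k) f * g) :=
  mul_perp_h_general n f g
end

section
/- The number of semistandard Young tableaux of shape λ*(n) (the diagonal concatenation of λ with a single row of length n) with entries bounded by N equals the sum over all partitions λ⁺ with λ⁺/λ a horizontal strip of size n of the number of SSYT of shape λ⁺ with entries bounded by N; moreover the bijection preserves content. -/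
open scoped Classical

/-- The single-row partition `(n)`. -/
def rowShape (n : ℕ) : ℕ → ℕ := fun i => if i = 0 then n else 0

/-- The single-column partition `(1ⁿ)`. -/
def colShape (n : ℕ) : ℕ → ℕ := fun i => if i < n then 1 else 0

/-- `(i, j)` is a cell of the skew shape `l / m` (row `i`, column `j`). -/
def cellOf (l m : ℕ → ℕ) (i j : ℕ) : Prop := m i ≤ j ∧ j < l i

/-- The number of cells of the skew shape `l / m`. -/
noncomputable def shapeSize (l m : ℕ → ℕ) : ℕ :=
  Nat.card {p : ℕ × ℕ // cellOf l m p.1 p.2}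

/-- `lp / l` is a horizontal strip: `l ⊆ lp` and no two cells in the same column. -/
def IsHorizontalStrip (l lp : ℕ → ℕ) : Prop :=
  (∀ i, l i ≤ lp i) ∧ ∀ i i' j, cellOf lp l i j → cellOf lp l i' j → i = i'

/-- `lp / l` is a vertical strip: `l ⊆ lp` and no two cells in the same row. -/
def IsVerticalStrip (l lp : ℕ → ℕ) : Prop :=
  (∀ i, l i ≤ lp i) ∧ ∀ i j j', cellOf lp l i j → cellOf lp l i j' → j = j'

/-- A semistandard Young tableau of skew shape `l / m`: a filling of the cells by
positive integers, weakly increasing along rows and strictly increasing up columns. -/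
structure SkewSSYT (l m : ℕ → ℕ) where
  entry : ℕ → ℕ → ℕ
  pos : ∀ i j, cellOf l m i j → 0 < entry i j
  zero : ∀ i j, ¬ cellOf l m i j → entry i j = 0
  rowWeak : ∀ i j j', j ≤ j' → cellOf l m i j → cellOf l m i j' → entry i j ≤ entry i j'
  colStrict : ∀ i j, cellOf l m i j → cellOf l m (i + 1) j → entry i j < entry (i + 1) j

/-- The number of cells of `l / m` filled with the value `k + 1` by `e`. -/
noncomputable def contentOf (l m : ℕ → ℕ) (e : ℕ → ℕ → ℕ) (k : ℕ) : ℕ :=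
  Nat.card {p : ℕ × ℕ // cellOf l m p.1 p.2 ∧ e p.1 p.2 = k + 1}

/-- The skew Schur function `s_{l/m}` as a formal power series in the variables
`x_0, x_1, x_2, …` (variable `k` recording entries equal to `k+1`): the
coefficient of a monomial is the number of SSYT of shape `l/m` with that content. -/
noncomputable def skewSchur (l m : ℕ → ℕ) : MvPowerSeries ℕ ℚ :=
  fun d => (Nat.card {T : SkewSSYT l m // ∀ k, contentOf l m T.entry k = d k} : ℚ)

/-- The complete homogeneous symmetric function `h_n = s_{(n)}`. -/
noncomputable def hS (n : ℕ) : MvPowerSeries ℕ ℚ := skewSchur (rowShape n) emptyShape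

/-- The elementary symmetric function `e_n = s_{(1ⁿ)}`. -/
noncomputable def eS (n : ℕ) : MvPowerSeries ℕ ℚ := skewSchur (colShape n) emptyShape

/-- Outer shape of the diagonal concatenation `(l/m) * (s/t)`, where `L` bounds
the number of rows of `s`: the shape `s/t` occupies the bottom `L` rows shifted
right by `l 0`, and `l/m` occupies the rows above, shifted right by `t (L-1)`,
so that the bottom-right cell of `l/m` is immediately above and to the left of
the top-left cell of `s/t`. -/
def catL (l s t : ℕ → ℕ) (L : ℕ) : ℕ → ℕ :=
  fun i => if i < L then l 0 + s i else t (L - 1) + l (i - L)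

/-- Inner shape of the diagonal concatenation `(l/m) * (s/t)`. -/
def catM (l m t : ℕ → ℕ) (L : ℕ) : ℕ → ℕ :=
  fun i => if i < L then l 0 + t i else t (L - 1) + m (i - L)

open scoped Classical

section Helpers

/-- finsum over ℕ with support in `range R`. -/
lemma finsum_nat_eq_range (f : ℕ → ℕ) (R : ℕ) (h : ∀ i, R ≤ i → f i = 0) :
    ∑ᶠ i, f i = ∑ i ∈ Finset.range R, f i := by
  apply finsum_eq_sum_of_support_subset
  intro i hi
  simp only [Function.mem_support] at hi
  simp only [Finset.coe_range, Set.mem_Iio]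
  by_contra hR
  exact hi (h i (by omega))

lemma card_subtype_empty {α : Type*} {P : α → Prop} (h : ∀ a, ¬ P a) :
    Nat.card {x // P x} = 0 := by
  haveI : IsEmpty {x // P x} := ⟨fun x => h x x.2⟩
  simp

lemma card_subtype_unique {α : Type*} {P : α → Prop} (a : α) (ha : P a)
    (h : ∀ b, P b → b = a) : Nat.card {x // P x} = 1 := by
  haveI : Unique {x // P x} := ⟨⟨⟨a, ha⟩⟩, fun b => Subtype.ext (h b b.2)⟩
  simp

lemma card_eq_finsum_fibers {α ι : Type*} (S : Set α) (hS : S.Finite) (f : α → ι) :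
    Nat.card S = ∑ᶠ i, Nat.card {x : α // x ∈ S ∧ f x = i} := by
  classical
  have h1 : Nat.card S = hS.toFinset.card := by
    rw [← Nat.card_eq_finsetCard]
    exact Nat.card_congr (Equiv.subtypeEquivRight (by simp))
  have h2 : ∀ i, Nat.card {x : α // x ∈ S ∧ f x = i} =
      (hS.toFinset.filter (fun a => f a = i)).card := by
    intro i
    rw [← Nat.card_eq_finsetCard]
    exact Nat.card_congr (Equiv.subtypeEquivRight (by simp))
  rw [h1]
  rw [Finset.card_eq_sum_card_fiberwise (f := f) (t := hS.toFinset.image f)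
    (fun x hx => Finset.mem_image_of_mem f hx)]
  rw [finsum_eq_sum_of_support_subset _ (s := hS.toFinset.image f) ?_]
  · exact Finset.sum_congr rfl (fun i _ => (h2 i).symm)
  · intro i hi
    simp only [Function.mem_support] at hi
    by_contra hmem
    apply hi
    apply card_subtype_empty
    rintro a ⟨haS, hfa⟩
    subst hfa
    exact hmem (Finset.mem_image_of_mem f ((Set.Finite.mem_toFinset hS).2 haS))

lemma card_eq_of_fibers {α β ι : Type*} (S : Set α) (T : Set β) (hS : S.Finite) (hT : T.Finite)
    (f : α → ι) (g : β → ι)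
    (h : ∀ i, Nat.card {x : α // x ∈ S ∧ f x = i} = Nat.card {y : β // y ∈ T ∧ g y = i}) :
    Nat.card S = Nat.card T := by
  rw [card_eq_finsum_fibers S hS f, card_eq_finsum_fibers T hT g]
  exact finsum_congr h

lemma finite_of_injOn {α : Type*} {γ : Type*} [Finite γ] (S : Set α) (F : α → γ)
    (hF : Set.InjOn F S) : S.Finite :=
  Set.Finite.of_finite_image (Set.toFinite _) hF

lemma finite_shlike (B R : ℕ) : {f : ℕ → ℕ | (∀ i, f i ≤ B) ∧ ∀ i, R ≤ i → f i = 0}.Finite := by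
  apply finite_of_injOn _ (fun f => fun i : Fin R => (⟨min (f i) B, by omega⟩ : Fin (B+1)))
  rintro f ⟨hf1, hf2⟩ g ⟨hg1, hg2⟩ hfg
  funext i
  by_cases hiR : i < R
  · have := congrFun hfg ⟨i, hiR⟩
    simp only [Fin.mk.injEq] at this
    have h1 := hf1 i; have h2 := hg1 i
    omega
  · rw [hf2 i (by omega), hg2 i (by omega)]

lemma finite_chainlike (B R K : ℕ) :
    {ν : ℕ → ℕ → ℕ | (∀ k i, ν k i ≤ B) ∧ (∀ k i, R ≤ i → ν k i = 0) ∧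
      ∀ k, K ≤ k → ν k = ν K}.Finite := by
  apply finite_of_injOn _
    (fun ν => fun (k : Fin (K+1)) (i : Fin R) => (⟨min (ν k i) B, by omega⟩ : Fin (B+1)))
  rintro ν ⟨h1, h2, h3⟩ ν' ⟨h1', h2', h3'⟩ hfg
  have key : ∀ k i, k ≤ K → i < R → ν k i = ν' k i := by
    intro k i hk hi
    have := congrFun (congrFun hfg ⟨k, by omega⟩) ⟨i, hi⟩
    simp only [Fin.mk.injEq] at this
    have := h1 k i; have := h1' k i
    omega
  funext k i
  by_cases hiR : i < R
  · by_cases hkK : k ≤ K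
    · exact key k i hkK hiR
    · rw [h3 k (by omega), h3' k (by omega)]; exact key K i le_rfl hiR
  · rw [h2 k i (by omega), h2' k i (by omega)]

end Helpers

section Shapes

noncomputable def ssz (lp l : ℕ → ℕ) : ℕ := ∑ᶠ i, (lp i - l i)

def Interl (l lp : ℕ → ℕ) : Prop := (∀ i, l i ≤ lp i) ∧ ∀ i, lp (i+1) ≤ l i

lemma ssz_eq_range (lp l : ℕ → ℕ) (R : ℕ) (h : ∀ i, R ≤ i → lp i - l i = 0) :
    ssz lp l = ∑ i ∈ Finset.range R, (lp i - l i) := finsum_nat_eq_range _ R h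

lemma ssz_self (l : ℕ → ℕ) : ssz l l = 0 := by
  rw [ssz_eq_range l l 0 (by omega)]; simp

lemma card_cells (l m : ℕ → ℕ) (R B : ℕ) (hml : ∀ i, m i ≤ l i)
    (hR : ∀ i, R ≤ i → l i = m i) (hB : ∀ i, l i ≤ B) :
    Nat.card {p : ℕ × ℕ // cellOf l m p.1 p.2} = ssz l m := by
  classical
  have e1 : {p : ℕ × ℕ // cellOf l m p.1 p.2} ≃
      {p : ℕ × ℕ // p ∈ (Finset.range R ×ˢ Finset.range B).filter
        (fun p => m p.1 ≤ p.2 ∧ p.2 < l p.1)} := by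
    apply Equiv.subtypeEquivRight
    intro p
    simp only [Finset.mem_filter, Finset.mem_product, Finset.mem_range, cellOf]
    constructor
    · rintro ⟨h1, h2⟩
      refine ⟨⟨?_, ?_⟩, h1, h2⟩
      · by_contra hc; have := hR p.1 (by omega); omega
      · have := hB p.1; omega
    · tauto
  rw [Nat.card_congr e1, Nat.card_eq_finsetCard]
  rw [ssz_eq_range l m R (fun i hi => by rw [hR i hi]; omega)]
  rw [Finset.card_filter, Finset.sum_product]
  apply Finset.sum_congr rfl
  intro i _
  have h2 : ∀ j, (if m i ≤ j ∧ j < l i then 1 else 0) =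
      (if j ∈ Finset.Ico (m i) (l i) then 1 else 0) := by
    intro j; simp [Finset.mem_Ico]
  simp only [h2]
  rw [← Finset.card_filter]
  have h3 : Finset.filter (fun j => j ∈ Finset.Ico (m i) (l i)) (Finset.range B) =
      Finset.Ico (m i) (l i) := by
    ext j
    simp only [Finset.mem_filter, Finset.mem_range, Finset.mem_Ico]
    have := hB i
    omega
  rw [h3, Nat.card_Ico]

lemma shapeSize_eq_ssz (l m : ℕ → ℕ) (R : ℕ) (hml : ∀ i, m i ≤ l i)
    (hR : ∀ i, R ≤ i → l i = 0) : shapeSize l m = ssz l m := by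
  apply card_cells l m R (B := (∑ i ∈ Finset.range R, l i) + 1) hml
  · intro i hi; have := hml i; have := hR i hi; omega
  · intro i
    by_cases hiR : i < R
    · have : l i ≤ ∑ i ∈ Finset.range R, l i :=
        Finset.single_le_sum (fun j _ => Nat.zero_le (l j)) (Finset.mem_range.2 hiR)
      omega
    · rw [hR i (by omega)]; omega

lemma interl_iff_strip (l lp : ℕ → ℕ) (hl : Antitone l) (hlp : Antitone lp) :
    IsHorizontalStrip l lp ↔ Interl l lp := by
  constructor
  · rintro ⟨hsub, hcol⟩
    refine ⟨hsub, fun i => ?_⟩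
    by_contra hc
    push_neg at hc
    have c1 : cellOf lp l (i+1) (l i) := ⟨hl (Nat.le_succ i), hc⟩
    have c2 : cellOf lp l i (l i) := ⟨le_rfl, lt_of_lt_of_le hc (hlp (Nat.le_succ i))⟩
    have := hcol _ _ _ c1 c2
    omega
  · rintro ⟨hsub, hint⟩
    have key : ∀ a b j, a < b → cellOf lp l a j → cellOf lp l b j → False := by
      rintro a b j hab ⟨ha1, ha2⟩ ⟨hb1, hb2⟩
      have h1 : lp b ≤ lp (a+1) := hlp (by omega)
      have h2 := hint a
      omega
    refine ⟨hsub, fun i i' j hc hc' => ?_⟩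
    rcases lt_trichotomy i i' with h | h | h
    · exact (key _ _ _ h hc hc').elim
    · exact h
    · exact (key _ _ _ h hc' hc).elim

def ChainP0 (m l : ℕ → ℕ) (N : ℕ) (ν : ℕ → ℕ → ℕ) : Prop :=
  ν 0 = m ∧ (∀ k, N ≤ k → ν k = l) ∧ (∀ k, Antitone (ν k)) ∧
  (∀ k i, ν k i ≤ ν (k+1) i) ∧ (∀ k i, ν (k+1) (i+1) ≤ ν k i)

lemma ChainP0.monoK {m l : ℕ → ℕ} {N : ℕ} {ν : ℕ → ℕ → ℕ} (h : ChainP0 m l N ν)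
    {k k' : ℕ} (hk : k ≤ k') (i : ℕ) : ν k i ≤ ν k' i :=
  monotone_nat_of_le_succ (f := fun k => ν k i) (fun k => h.2.2.2.1 k i) hk

lemma ChainP0.le_top {m l : ℕ → ℕ} {N : ℕ} {ν : ℕ → ℕ → ℕ} (h : ChainP0 m l N ν)
    (k i : ℕ) : ν k i ≤ l i := by
  have h1 := h.monoK (le_max_left k N) i
  rw [h.2.1 (max k N) (le_max_right k N)] at h1
  exact h1

lemma ChainP0.ge_base {m l : ℕ → ℕ} {N : ℕ} {ν : ℕ → ℕ → ℕ} (h : ChainP0 m l N ν)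
    (k i : ℕ) : m i ≤ ν k i := by
  have h1 := h.monoK (Nat.zero_le k) i
  rw [h.1] at h1
  exact h1

end Shapes

section TabChain

variable {l m : ℕ → ℕ}

lemma SkewSSYT.ext' {T T' : SkewSSYT l m} (h : T.entry = T'.entry) : T = T' := by
  cases T; cases T'; simp only at h; subst h; rfl

/-- The shape cut out by entries `≤ k` in row `i`. -/
noncomputable def tabCut (T : SkewSSYT l m) (k i : ℕ) : ℕ :=
  sInf {j | m i ≤ j ∧ ∀ j', j ≤ j' → j' < l i → k < T.entry i j'}

lemma tabCut_top_mem (hml : SubShape m l) (T : SkewSSYT l m) (k i : ℕ) :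
    l i ∈ {j | m i ≤ j ∧ ∀ j', j ≤ j' → j' < l i → k < T.entry i j'} :=
  ⟨hml i, fun j' h1 h2 => absurd h2 (by omega)⟩

lemma tabCut_le (hml : SubShape m l) (T : SkewSSYT l m) (k i : ℕ) :
    tabCut T k i ≤ l i := Nat.sInf_le (tabCut_top_mem hml T k i)

lemma tabCut_mem (hml : SubShape m l) (T : SkewSSYT l m) (k i : ℕ) :
    tabCut T k i ∈ {j | m i ≤ j ∧ ∀ j', j ≤ j' → j' < l i → k < T.entry i j'} :=
  Nat.sInf_mem ⟨l i, tabCut_top_mem hml T k i⟩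

lemma tabCut_ge (hml : SubShape m l) (T : SkewSSYT l m) (k i : ℕ) :
    m i ≤ tabCut T k i := (tabCut_mem hml T k i).1

lemma tabCut_char (hml : SubShape m l) (T : SkewSSYT l m) (k i j : ℕ)
    (hc : cellOf l m i j) : j < tabCut T k i ↔ T.entry i j ≤ k := by
  constructor
  · intro hj
    have hnot : j ∉ {j | m i ≤ j ∧ ∀ j', j ≤ j' → j' < l i → k < T.entry i j'} :=
      Nat.notMem_of_lt_sInf hj
    simp only [Set.mem_setOf_eq, not_and, not_forall] at hnot
    obtain ⟨j', hj1, hj2, hj3⟩ := hnot hc.1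
    push_neg at hj3
    calc T.entry i j ≤ T.entry i j' := T.rowWeak i j j' hj1 hc ⟨le_trans hc.1 hj1, hj2⟩
    _ ≤ k := hj3
  · intro he
    by_contra hj
    push_neg at hj
    exact absurd ((tabCut_mem hml T k i).2 j hj hc.2) (by omega)

lemma tabCut_zero (hml : SubShape m l) (T : SkewSSYT l m) : tabCut T 0 = m := by
  funext i
  refine le_antisymm (Nat.sInf_le ⟨le_rfl, fun j' h1 h2 => T.pos i j' ⟨h1, h2⟩⟩)
    (tabCut_ge hml T 0 i)

lemma tabCut_top {N : ℕ} (hml : SubShape m l) (T : SkewSSYT l m)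
    (hbd : ∀ i j, cellOf l m i j → T.entry i j ≤ N) {k : ℕ} (hk : N ≤ k) :
    tabCut T k = l := by
  funext i
  refine le_antisymm (tabCut_le hml T k i) ?_
  by_contra hc
  push_neg at hc
  have hm := tabCut_mem hml T k i
  have hcell : cellOf l m i (tabCut T k i) := ⟨hm.1, hc⟩
  have := hm.2 (tabCut T k i) le_rfl hc
  have := hbd i (tabCut T k i) hcell
  omega

lemma tabCut_monoK (hml : SubShape m l) (T : SkewSSYT l m) (k i : ℕ) :
    tabCut T k i ≤ tabCut T (k+1) i := by
  apply Nat.sInf_le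
  obtain ⟨h1, h2⟩ := tabCut_mem hml T (k+1) i
  exact ⟨h1, fun j' hj1 hj2 => by have := h2 j' hj1 hj2; omega⟩

lemma tabCut_anti (hal : Antitone l) (ham : Antitone m) (hml : SubShape m l)
    (T : SkewSSYT l m) (k : ℕ) : Antitone (tabCut T k) := by
  apply antitone_nat_of_succ_le
  intro i
  by_contra hc
  push_neg at hc
  set j := tabCut T k i with hj
  have hj1 : m i ≤ j := tabCut_ge hml T k i
  have hj2 : j < l (i+1) := lt_of_lt_of_le hc (tabCut_le hml T k (i+1))
  have hcell1 : cellOf l m (i+1) j := ⟨le_trans (ham (Nat.le_succ i)) hj1, hj2⟩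
  have hcell0 : cellOf l m i j := ⟨hj1, lt_of_lt_of_le hj2 (hal (Nat.le_succ i))⟩
  have e1 : T.entry (i+1) j ≤ k := (tabCut_char hml T k (i+1) j hcell1).1 hc
  have e0 : ¬ T.entry i j ≤ k := fun h =>
    absurd ((tabCut_char hml T k i j hcell0).2 h) (by omega)
  have := T.colStrict i j hcell0 hcell1
  omega

lemma tabCut_inter (hal : Antitone l) (ham : Antitone m) (hml : SubShape m l)
    (T : SkewSSYT l m) (k i : ℕ) : tabCut T (k+1) (i+1) ≤ tabCut T k i := by
  by_contra hc
  push_neg at hc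
  set j := tabCut T k i with hj
  have hj1 : m i ≤ j := tabCut_ge hml T k i
  have hj2 : j < l (i+1) := lt_of_lt_of_le hc (tabCut_le hml T (k+1) (i+1))
  have hcell1 : cellOf l m (i+1) j := ⟨le_trans (ham (Nat.le_succ i)) hj1, hj2⟩
  have hcell0 : cellOf l m i j := ⟨hj1, lt_of_lt_of_le hj2 (hal (Nat.le_succ i))⟩
  have e1 : T.entry (i+1) j ≤ k + 1 := (tabCut_char hml T (k+1) (i+1) j hcell1).1 hc
  have e0 : ¬ T.entry i j ≤ k := fun h =>
    absurd ((tabCut_char hml T k i j hcell0).2 h) (by omega)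
  have := T.colStrict i j hcell0 hcell1
  omega

lemma tabCut_chain {N : ℕ} (hal : Antitone l) (ham : Antitone m) (hml : SubShape m l)
    (T : SkewSSYT l m) (hbd : ∀ i j, cellOf l m i j → T.entry i j ≤ N) :
    ChainP0 m l N (tabCut T) :=
  ⟨tabCut_zero hml T, fun k hk => tabCut_top hml T hbd hk, fun k => tabCut_anti hal ham hml T k,
    fun k i => tabCut_monoK hml T k i, fun k i => tabCut_inter hal ham hml T k i⟩

lemma tabCut_step_cell (hml : SubShape m l) (T : SkewSSYT l m) (k i j : ℕ) :
    cellOf (tabCut T (k+1)) (tabCut T k) i j ↔ cellOf l m i j ∧ T.entry i j = k + 1 := by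
  constructor
  · rintro ⟨h1, h2⟩
    have hcell : cellOf l m i j :=
      ⟨le_trans (tabCut_ge hml T k i) h1, lt_of_lt_of_le h2 (tabCut_le hml T (k+1) i)⟩
    have e1 : T.entry i j ≤ k + 1 := (tabCut_char hml T (k+1) i j hcell).1 h2
    have e0 : ¬ T.entry i j ≤ k := fun h =>
      absurd ((tabCut_char hml T k i j hcell).2 h) (by omega)
    exact ⟨hcell, by omega⟩
  · rintro ⟨hcell, he⟩
    constructor
    · by_contra hc
      push_neg at hc
      have := (tabCut_char hml T k i j hcell).1 hc
      omega
    · exact (tabCut_char hml T (k+1) i j hcell).2 (by omega)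

lemma content_eq_ssz {R : ℕ} (hal : Antitone l) (hml : SubShape m l)
    (hR : ∀ i, R ≤ i → l i = 0) (T : SkewSSYT l m) (k : ℕ) :
    contentOf l m T.entry k = ssz (tabCut T (k+1)) (tabCut T k) := by
  have e1 : {p : ℕ × ℕ // cellOf l m p.1 p.2 ∧ T.entry p.1 p.2 = k + 1} ≃
      {p : ℕ × ℕ // cellOf (tabCut T (k+1)) (tabCut T k) p.1 p.2} :=
    Equiv.subtypeEquivRight (fun p => (tabCut_step_cell hml T k p.1 p.2).symm)
  rw [contentOf, Nat.card_congr e1]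
  apply card_cells _ _ R (l 0)
  · intro i; exact tabCut_monoK hml T k i
  · intro i hi
    have h1 := tabCut_le hml T k i
    have h2 := tabCut_le hml T (k+1) i
    have h3 := tabCut_ge hml T k i
    have h4 := tabCut_ge hml T (k+1) i
    have h5 := hR i hi
    have := hml i
    omega
  · intro i
    have h1 := tabCut_le hml T (k+1) i
    have := hal (Nat.zero_le i)
    omega

/-- entries from a chain -/
noncomputable def chainEnt (ν : ℕ → ℕ → ℕ) (i j : ℕ) : ℕ := sInf {k | j < ν k i}

variable {N : ℕ} {ν : ℕ → ℕ → ℕ}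

lemma chainEnt_zero (h : ChainP0 m l N ν) {i j : ℕ} (hc : ¬ cellOf l m i j) :
    chainEnt ν i j = 0 := by
  rw [cellOf] at hc
  push_neg at hc
  rcases Nat.lt_or_ge j (m i) with hj | hj
  · exact Nat.sInf_eq_zero.2 (Or.inl (by simp only [Set.mem_setOf_eq, h.1]; exact hj))
  · apply Nat.sInf_eq_zero.2
    apply Or.inr
    ext k
    simp only [Set.mem_setOf_eq, Set.mem_empty_iff_false, iff_false, not_lt]
    exact le_trans (h.le_top k i) (hc hj)

lemma chainEnt_nonempty (h : ChainP0 m l N ν) {i j : ℕ} (hc : cellOf l m i j) :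
    {k | j < ν k i}.Nonempty := ⟨N, by simp only [Set.mem_setOf_eq, h.2.1 N le_rfl]; exact hc.2⟩

lemma chainEnt_le (h : ChainP0 m l N ν) {i j : ℕ} (hc : cellOf l m i j) :
    chainEnt ν i j ≤ N :=
  Nat.sInf_le (by simp only [Set.mem_setOf_eq, h.2.1 N le_rfl]; exact hc.2)

lemma chainEnt_pos (h : ChainP0 m l N ν) {i j : ℕ} (hc : cellOf l m i j) :
    0 < chainEnt ν i j := by
  rcases Nat.eq_zero_or_pos (chainEnt ν i j) with h0 | h0
  · rcases Nat.sInf_eq_zero.1 h0 with hmem | hemp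
    · simp only [Set.mem_setOf_eq, h.1] at hmem
      exact absurd hc.1 (by omega)
    · exact absurd (chainEnt_nonempty h hc) (by rw [hemp]; exact Set.not_nonempty_empty)
  · exact h0

lemma chainEnt_char (h : ChainP0 m l N ν) {i j : ℕ} (hc : cellOf l m i j) (k : ℕ) :
    chainEnt ν i j = k + 1 ↔ ν k i ≤ j ∧ j < ν (k+1) i := by
  constructor
  · intro he
    constructor
    · have hlt1 : k < chainEnt ν i j := by omega
      have : k ∉ {k | j < ν k i} := Nat.notMem_of_lt_sInf hlt1
      simpa using this
    · have : k + 1 ∈ {k | j < ν k i} := he ▸ Nat.sInf_mem (chainEnt_nonempty h hc)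
      simpa using this
  · rintro ⟨h1, h2⟩
    have hle : chainEnt ν i j ≤ k + 1 := Nat.sInf_le h2
    rcases Nat.lt_or_ge (chainEnt ν i j) (k+1) with hlt | hge
    · exfalso
      have hmem : j < ν (chainEnt ν i j) i := Nat.sInf_mem (chainEnt_nonempty h hc)
      have hmono := h.monoK (Nat.lt_succ_iff.mp hlt) i
      omega
    · omega

lemma chainEnt_step_cell (h : ChainP0 m l N ν) (k i j : ℕ) :
    cellOf (ν (k+1)) (ν k) i j ↔ cellOf l m i j ∧ chainEnt ν i j = k + 1 := by
  constructor
  · rintro ⟨h1, h2⟩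
    have hcell : cellOf l m i j :=
      ⟨le_trans (h.ge_base k i) h1, lt_of_lt_of_le h2 (h.le_top (k+1) i)⟩
    exact ⟨hcell, (chainEnt_char h hcell k).2 ⟨h1, h2⟩⟩
  · rintro ⟨hcell, he⟩
    exact (chainEnt_char h hcell k).1 he

/-- the tableau associated to a chain -/
noncomputable def chainTab (h : ChainP0 m l N ν) : SkewSSYT l m where
  entry := chainEnt ν
  pos := fun i j hc => chainEnt_pos h hc
  zero := fun i j hc => chainEnt_zero h hc
  rowWeak := by
    intro i j j' hjj hc hc'
    have hmem : j' < ν (chainEnt ν i j') i := Nat.sInf_mem (chainEnt_nonempty h hc')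
    exact Nat.sInf_le (show j < ν (chainEnt ν i j') i by omega)
  colStrict := by
    intro i j hc hc'
    obtain ⟨b', hb⟩ := Nat.exists_eq_add_of_lt (chainEnt_pos h hc)
    obtain ⟨a', ha⟩ := Nat.exists_eq_add_of_lt (chainEnt_pos h hc')
    rw [hb, ha]
    simp only [Nat.zero_add] at *
    have hB := (chainEnt_char h hc b').1 hb
    have hA := (chainEnt_char h hc' a').1 ha
    by_contra hcon
    push_neg at hcon
    rcases Nat.lt_or_ge a' b' with hab | hab
    · have h1 : ν (a'+1) i ≤ ν b' i := h.monoK (by omega) i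
      have h2 : ν (a'+1) (i+1) ≤ ν (a'+1) i := h.2.2.1 (a'+1) (Nat.le_succ i)
      omega
    · have hab' : a' = b' := by omega
      subst hab'
      have := h.2.2.2.2 a' i
      omega

lemma chainTab_content (h : ChainP0 m l N ν) {R : ℕ} (hal : Antitone l)
    (hml : SubShape m l) (hR : ∀ i, R ≤ i → l i = 0) (k : ℕ) :
    contentOf l m (chainTab h).entry k = ssz (ν (k+1)) (ν k) := by
  have e1 : {p : ℕ × ℕ // cellOf l m p.1 p.2 ∧ (chainTab h).entry p.1 p.2 = k + 1} ≃
      {p : ℕ × ℕ // cellOf (ν (k+1)) (ν k) p.1 p.2} :=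
    Equiv.subtypeEquivRight (fun p => (chainEnt_step_cell h k p.1 p.2).symm)
  rw [contentOf, Nat.card_congr e1]
  apply card_cells _ _ R (l 0)
  · intro i; exact h.2.2.2.1 k i
  · intro i hi
    have h1 := h.le_top k i
    have h2 := h.le_top (k+1) i
    have h3 := h.ge_base k i
    have h4 := h.ge_base (k+1) i
    have h5 := hR i hi
    have := hml i
    omega
  · intro i
    have h1 := h.le_top (k+1) i
    have := hal (Nat.zero_le i)
    omega

lemma roundtrip1 (hml : SubShape m l) (T : SkewSSYT l m) :
    chainEnt (tabCut T) = T.entry := by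
  funext i j
  by_cases hc : cellOf l m i j
  · have hpos := T.pos i j hc
    have hchar : ∀ k, j < tabCut T k i ↔ T.entry i j ≤ k := fun k => tabCut_char hml T k i j hc
    have hset : {k | j < tabCut T k i} = {k | T.entry i j ≤ k} := by
      ext k; exact hchar k
    rw [chainEnt, hset]
    have h1 : T.entry i j ∈ {k | T.entry i j ≤ k} := by simp
    refine le_antisymm (Nat.sInf_le h1) ?_
    have h2 : sInf {k | T.entry i j ≤ k} ∈ {k | T.entry i j ≤ k} := Nat.sInf_mem ⟨_, h1⟩
    exact h2
  · rw [T.zero i j hc]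
    rw [cellOf] at hc
    push_neg at hc
    rcases Nat.lt_or_ge j (m i) with hj | hj
    · apply Nat.sInf_eq_zero.2
      apply Or.inl
      simp only [Set.mem_setOf_eq, tabCut_zero hml T]
      exact hj
    · apply Nat.sInf_eq_zero.2
      apply Or.inr
      ext k
      simp only [Set.mem_setOf_eq, Set.mem_empty_iff_false, iff_false, not_lt]
      exact le_trans (tabCut_le hml T k i) (hc hj)

lemma roundtrip2 (h : ChainP0 m l N ν) (hml : SubShape m l) (k i : ℕ) :
    tabCut (chainTab h) k i = ν k i := by
  have hmem : ν k i ∈ {j | m i ≤ j ∧ ∀ j', j ≤ j' → j' < l i →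
      k < (chainTab h).entry i j'} := by
    refine ⟨h.ge_base k i, fun j' hj1 hj2 => ?_⟩
    have hcell : cellOf l m i j' := ⟨le_trans (h.ge_base k i) hj1, hj2⟩
    show k < chainEnt ν i j'
    by_contra hcon
    push_neg at hcon
    have hmem2 : j' < ν (chainEnt ν i j') i := Nat.sInf_mem (chainEnt_nonempty h hcell)
    have := h.monoK hcon i
    omega
  refine le_antisymm (Nat.sInf_le hmem) ?_
  have hsmem := Nat.sInf_mem (⟨ν k i, hmem⟩ :
    {j | m i ≤ j ∧ ∀ j', j ≤ j' → j' < l i → k < (chainTab h).entry i j'}.Nonempty)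
  by_contra hcon
  push_neg at hcon
  set j := tabCut (chainTab h) k i with hjdef
  have hcell : cellOf l m i j := ⟨hsmem.1, lt_of_lt_of_le hcon (h.le_top k i)⟩
  have he : (chainTab h).entry i j ≤ k := Nat.sInf_le (Set.mem_setOf_eq ▸ hcon)
  have := hsmem.2 j le_rfl hcell.2
  omega

theorem card_tab_eq_chain (l m : ℕ → ℕ) (hal : Antitone l) (ham : Antitone m)
    (hml : SubShape m l) (R : ℕ) (hR : ∀ i, R ≤ i → l i = 0) (N : ℕ) (d : ℕ → ℕ) :
    Nat.card {T : SkewSSYT l m // (∀ i j, cellOf l m i j → T.entry i j ≤ N) ∧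
      ∀ k, contentOf l m T.entry k = d k} =
    Nat.card {ν : ℕ → ℕ → ℕ // ChainP0 m l N ν ∧ ∀ k, ssz (ν (k+1)) (ν k) = d k} := by
  apply Nat.card_congr
  refine ⟨fun T => ⟨tabCut T.1, tabCut_chain hal ham hml T.1 T.2.1, fun k => ?_⟩,
    fun p => ⟨chainTab p.2.1, fun i j hc => chainEnt_le p.2.1 hc, fun k => ?_⟩, ?_, ?_⟩
  · rw [← content_eq_ssz hal hml hR T.1 k]
    exact T.2.2 k
  · rw [chainTab_content p.2.1 hal hml hR k]
    exact p.2.2 k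
  · intro T
    apply Subtype.ext
    apply SkewSSYT.ext'
    exact roundtrip1 hml T.1
  · intro p
    apply Subtype.ext
    funext k i
    exact roundtrip2 p.2.1 hml k i

end TabChain

section Diamond

lemma sum_shift (f : ℕ → ℕ) (Q : ℕ) (hf : f Q = 0) :
    ∑ i ∈ Finset.range Q, f (i+1) + f 0 = ∑ i ∈ Finset.range Q, f i := by
  have h1 := Finset.sum_range_succ' f Q
  have h2 := Finset.sum_range_succ f Q
  omega

lemma ssz_sub (lp l : ℕ → ℕ) (R : ℕ) (hle : ∀ i, l i ≤ lp i)
    (h : ∀ i, R ≤ i → lp i = 0) :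
    ssz lp l + ∑ i ∈ Finset.range R, l i = ∑ i ∈ Finset.range R, lp i := by
  rw [ssz_eq_range lp l R (fun i hi => by have := hle i; have := h i hi; omega)]
  rw [← Finset.sum_add_distrib]
  exact Finset.sum_congr rfl (fun i _ => by have := hle i; omega)

lemma ssz_single_le (lp l : ℕ → ℕ) (R : ℕ) (hle : ∀ i, l i ≤ lp i)
    (h : ∀ i, R ≤ i → lp i = 0) : lp 0 - l 0 ≤ ssz lp l := by
  rw [ssz_eq_range lp l (R+1) (fun i hi => by have := hle i; have := h i (by omega); omega)]
  exact Finset.single_le_sum (f := fun i => lp i - l i) (fun j _ => Nat.zero_le _)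
    (Finset.mem_range.2 (by omega))

lemma diamond_sums (l ρ lp μ : ℕ → ℕ) (R : ℕ)
    (hRl : ∀ i, R ≤ i → l i = 0) (hRρ : ∀ i, R ≤ i → ρ i = 0)
    (hlpl : Interl l lp) (hlpρ : Interl ρ lp) (hμl : Interl μ l) (hμρ : Interl μ ρ)
    (hpt : ∀ i, μ i + lp (i+1) = max (l (i+1)) (ρ (i+1)) + min (l i) (ρ i)) :
    ssz lp ρ + max (l 0) (ρ 0) = ssz l μ + lp 0 ∧
    ssz lp l + max (l 0) (ρ 0) = ssz ρ μ + lp 0 := by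
  set Q := R + 2 with hQ
  have hlpz : ∀ i, Q ≤ i → lp i = 0 := by
    intro i hi
    obtain ⟨j, rfl⟩ : ∃ j, i = j + 1 := ⟨i - 1, by omega⟩
    have h1 := hlpρ.2 j
    have h2 := hRρ j (by omega)
    omega
  have hlz : ∀ i, Q ≤ i → l i = 0 := fun i hi => hRl i (by omega)
  have hρz : ∀ i, Q ≤ i → ρ i = 0 := fun i hi => hRρ i (by omega)
  have hμz : ∀ i, Q ≤ i → μ i = 0 := fun i hi => by
    have := hμl.1 i; have := hlz i hi; omega
  have h1 := ssz_sub lp l Q hlpl.1 hlpz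
  have h2 := ssz_sub lp ρ Q hlpρ.1 hlpz
  have h3 := ssz_sub l μ Q hμl.1 hlz
  have h4 := ssz_sub ρ μ Q hμρ.1 hρz
  have h5 : ∑ i ∈ Finset.range Q, μ i + ∑ i ∈ Finset.range Q, lp (i+1) =
      ∑ i ∈ Finset.range Q, max (l (i+1)) (ρ (i+1)) + ∑ i ∈ Finset.range Q, min (l i) (ρ i) := by
    rw [← Finset.sum_add_distrib, ← Finset.sum_add_distrib]
    exact Finset.sum_congr rfl (fun i _ => hpt i)
  have h6 : ∑ i ∈ Finset.range Q, lp (i+1) + lp 0 = ∑ i ∈ Finset.range Q, lp i :=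
    sum_shift lp Q (hlpz Q le_rfl)
  have h7 : ∑ i ∈ Finset.range Q, max (l (i+1)) (ρ (i+1)) + max (l 0) (ρ 0) =
      ∑ i ∈ Finset.range Q, max (l i) (ρ i) :=
    sum_shift (fun i => max (l i) (ρ i)) Q (by simp [hlz Q le_rfl, hρz Q le_rfl])
  have h8 : ∑ i ∈ Finset.range Q, max (l i) (ρ i) + ∑ i ∈ Finset.range Q, min (l i) (ρ i) =
      ∑ i ∈ Finset.range Q, l i + ∑ i ∈ Finset.range Q, ρ i := by
    rw [← Finset.sum_add_distrib, ← Finset.sum_add_distrib]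
    exact Finset.sum_congr rfl (fun i _ => by omega)
  omega

lemma lp_supp (l lp : ℕ → ℕ) (R : ℕ) (h2 : ∀ i, lp (i+1) ≤ l i)
    (hRl : ∀ i, R ≤ i → l i = 0) : ∀ i, R + 1 ≤ i → lp i = 0 := by
  intro i hi
  obtain ⟨j, rfl⟩ : ∃ j, i = j + 1 := ⟨i - 1, by omega⟩
  have := h2 j; have := hRl j (by omega); omega

theorem diamond (l ρ : ℕ → ℕ) (R n s : ℕ) (hl : Antitone l) (hρ : Antitone ρ)
    (hRl : ∀ i, R ≤ i → l i = 0) (hRρ : ∀ i, R ≤ i → ρ i = 0) :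
    Nat.card {x : (ℕ → ℕ) × ℕ // Antitone x.1 ∧ Interl x.1 l ∧ Interl x.1 ρ ∧
        x.2 ≤ n ∧ ssz ρ x.1 = x.2 ∧ ssz l x.1 + (n - x.2) = s} =
    Nat.card {lp : ℕ → ℕ // Antitone lp ∧ Interl l lp ∧ Interl ρ lp ∧
        ssz lp l = n ∧ ssz lp ρ = s} := by
  symm
  apply Nat.card_congr
  refine ⟨fun y => ⟨(fun i => max (l (i+1)) (ρ (i+1)) + min (l i) (ρ i) - y.1 (i+1),
      n - (y.1 0 - max (l 0) (ρ 0))), ?_⟩,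
    fun x => ⟨fun i => if i = 0 then max (l 0) (ρ 0) + (n - x.1.2)
      else max (l i) (ρ i) + min (l (i-1)) (ρ (i-1)) - x.1.1 (i-1), ?_⟩, ?_, ?_⟩
  · -- forward welldefinedness
    obtain ⟨lp, halp, h1, h2, hn, hs⟩ := y
    simp only
    have hpt : ∀ i, (fun i => max (l (i+1)) (ρ (i+1)) + min (l i) (ρ i) - lp (i+1)) i
        + lp (i+1) = max (l (i+1)) (ρ (i+1)) + min (l i) (ρ i) := by
      intro i
      have k2 := h1.2 i; have k4 := h2.2 i
      simp only
      omega
    set μ : ℕ → ℕ := fun i => max (l (i+1)) (ρ (i+1)) + min (l i) (ρ i) - lp (i+1) with hμdef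
    have key : ∀ i, max (l (i+1)) (ρ (i+1)) ≤ μ i ∧ μ i ≤ min (l i) (ρ i) := by
      intro i
      have k1 := h1.1 (i+1); have k2 := h1.2 i; have k3 := h2.1 (i+1); have k4 := h2.2 i
      have := hpt i
      omega
    have hμl : Interl μ l := ⟨fun i => by have := (key i).2; omega,
      fun i => by have := (key i).1; omega⟩
    have hμρ : Interl μ ρ := ⟨fun i => by have := (key i).2; omega,
      fun i => by have := (key i).1; omega⟩
    have hsums := diamond_sums l ρ lp μ R hRl hRρ h1 h2 hμl hμρ hpt
    have hM0 : max (l 0) (ρ 0) ≤ lp 0 := by have := h1.1 0; have := h2.1 0; omega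
    have ha_le : lp 0 - l 0 ≤ ssz lp l :=
      ssz_single_le lp l (R+1) h1.1 (lp_supp l lp R h1.2 hRl)
    refine ⟨?_, hμl, hμρ, by omega, by omega, by omega⟩
    apply antitone_nat_of_succ_le
    intro i
    have k1 := (key i).1; have k2 := (key i).2
    have k3 := (key (i+1)).1; have k4 := (key (i+1)).2
    have : min (l (i+1)) (ρ (i+1)) ≤ max (l (i+1)) (ρ (i+1)) := by omega
    omega
  · -- backward welldefinedness
    obtain ⟨⟨μ, c⟩, haμ, hμl, hμρ, hc, hρμ, hlμ⟩ := x
    dsimp only at haμ hμl hμρ hc hρμ hlμ ⊢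
    set lp : ℕ → ℕ := fun i => if i = 0 then max (l 0) (ρ 0) + (n - c)
      else max (l i) (ρ i) + min (l (i-1)) (ρ (i-1)) - μ (i-1) with hlpdef
    have key : ∀ i, max (l (i+1)) (ρ (i+1)) ≤ μ i ∧ μ i ≤ min (l i) (ρ i) := by
      intro i
      have k1 := hμl.1 i; have k2 := hμl.2 i; have k3 := hμρ.1 i; have k4 := hμρ.2 i
      omega
    have hlpsucc : ∀ i, lp (i+1) = max (l (i+1)) (ρ (i+1)) + min (l i) (ρ i) - μ i := by
      intro i
      rw [hlpdef]
      simp only [Nat.succ_ne_zero, if_false, Nat.add_sub_cancel]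
    have hpt : ∀ i, μ i + lp (i+1) = max (l (i+1)) (ρ (i+1)) + min (l i) (ρ i) := by
      intro i
      have := (key i).1; have := (key i).2
      rw [hlpsucc i]
      omega
    have hlp0 : lp 0 = max (l 0) (ρ 0) + (n - c) := by simp [hlpdef]
    have hlpl : Interl l lp := by
      constructor
      · intro i
        cases i with
        | zero => rw [hlp0]; omega
        | succ i => rw [hlpsucc i]; have := (key i).1; have := (key i).2; omega
      · intro i
        rw [hlpsucc i]; have := (key i).1; have := (key i).2; omega
    have hlpρ : Interl ρ lp := by
      constructor
      · intro i
        cases i with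
        | zero => rw [hlp0]; omega
        | succ i => rw [hlpsucc i]; have := (key i).1; have := (key i).2; omega
      · intro i
        rw [hlpsucc i]; have := (key i).1; have := (key i).2; omega
    have hsums := diamond_sums l ρ lp μ R hRl hRρ hlpl hlpρ hμl hμρ hpt
    refine ⟨?_, hlpl, hlpρ, by rw [hlp0] at hsums; omega, by rw [hlp0] at hsums; omega⟩
    apply antitone_nat_of_succ_le
    intro i
    cases i with
    | zero =>
      rw [hlpsucc 0, hlp0]
      have := (key 0).1; have := (key 0).2; omega
    | succ i =>
      rw [hlpsucc i, hlpsucc (i+1)]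
      have k1 := (key i).1; have k2 := (key i).2
      have k3 := (key (i+1)).1; have k4 := (key (i+1)).2
      have : min (l (i+1)) (ρ (i+1)) ≤ max (l (i+1)) (ρ (i+1)) := by omega
      omega
  · -- left inverse
    rintro ⟨lp, halp, h1, h2, hn, hs⟩
    apply Subtype.ext
    funext i
    simp only
    have hM0 : max (l 0) (ρ 0) ≤ lp 0 := by have := h1.1 0; have := h2.1 0; omega
    have ha_le : lp 0 - l 0 ≤ ssz lp l :=
      ssz_single_le lp l (R+1) h1.1 (lp_supp l lp R h1.2 hRl)
    cases i with
    | zero => simp only [↓reduceIte]; omega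
    | succ i =>
      simp only [Nat.succ_ne_zero, if_false, Nat.add_sub_cancel]
      have k1 := h1.1 (i+1); have k2 := h1.2 i; have k3 := h2.1 (i+1); have k4 := h2.2 i
      omega
  · -- right inverse
    rintro ⟨⟨μ, c⟩, haμ, hμl, hμρ, hc, hρμ, hlμ⟩
    dsimp only at haμ hμl hμρ hc hρμ hlμ
    apply Subtype.ext
    simp only [Prod.mk.injEq]
    constructor
    · funext i
      simp only [Nat.succ_ne_zero, if_false, Nat.add_sub_cancel]
      have k1 := hμl.1 i; have k2 := hμl.2 i; have k3 := hμρ.1 i; have k4 := hμρ.2 i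
      omega
    · simp only [↓reduceIte]
      omega

end Diamond

section MainDefs

def PairP (l : ℕ → ℕ) (N n : ℕ) (d : ℕ → ℕ) (p : (ℕ → ℕ → ℕ) × (ℕ → ℕ)) : Prop :=
  ChainP0 emptyShape l N p.1 ∧ p.2 0 = 0 ∧ Monotone p.2 ∧ (∀ k, N ≤ k → p.2 k = n) ∧
  ∀ k, ssz (p.1 (k+1)) (p.1 k) + (p.2 (k+1) - p.2 k) = d k

def RHSP (l : ℕ → ℕ) (N n : ℕ) (d : ℕ → ℕ) (q : (ℕ → ℕ) × (ℕ → ℕ → ℕ)) : Prop :=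
  Antitone q.1 ∧ Interl l q.1 ∧ ssz q.1 l = n ∧ ChainP0 emptyShape q.1 N q.2 ∧
  ∀ k, ssz (q.2 (k+1)) (q.2 k) = d k

lemma finite_wlike (B K : ℕ) :
    {w : ℕ → ℕ | (∀ k, w k ≤ B) ∧ ∀ k, K ≤ k → w k = w K}.Finite := by
  apply finite_of_injOn _ (fun w => fun k : Fin (K+1) => (⟨min (w k) B, by omega⟩ : Fin (B+1)))
  rintro w ⟨h1, h2⟩ w' ⟨h1', h2'⟩ hfg
  have key : ∀ k, k ≤ K → w k = w' k := by
    intro k hk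
    have := congrFun hfg ⟨k, by omega⟩
    simp only [Fin.mk.injEq] at this
    have := h1 k; have := h1' k
    omega
  funext k
  by_cases hkK : k ≤ K
  · exact key k hkK
  · rw [h2 k (by omega), h2' k (by omega)]; exact key K le_rfl

lemma card_fiber_fst {A B : Type*} (D : A → Prop) (P : A → B → Prop) (a : A) :
    Nat.card {x : A × B // x ∈ {y : A × B | D y.1 ∧ P y.1 y.2} ∧ x.1 = a} =
    if D a then Nat.card {b : B // P a b} else 0 := by
  by_cases hD : D a
  · rw [if_pos hD]
    apply Nat.card_congr
    refine ⟨fun x => ⟨x.1.2, by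
        obtain ⟨⟨h1, h2⟩, h3⟩ := x.2
        rw [h3] at h2
        exact h2⟩,
      fun b => ⟨(a, b.1), ⟨hD, b.2⟩, rfl⟩, ?_, ?_⟩
    · rintro ⟨⟨a1, b1⟩, ⟨hd, hp⟩, rfl⟩; rfl
    · rintro ⟨b, hb⟩; rfl
  · rw [if_neg hD]
    apply card_subtype_empty
    rintro ⟨a1, b1⟩ ⟨⟨hd, hp⟩, rfl⟩
    exact hD hd

lemma card_fiber_snd {A B : Type*} (P : A → B → Prop) (b : B) :
    Nat.card {x : A × B // x ∈ {y : A × B | P y.1 y.2} ∧ x.2 = b} =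
    Nat.card {a : A // P a b} := by
  apply Nat.card_congr
  refine ⟨fun x => ⟨x.1.1, by
      obtain ⟨h1, h2⟩ := x.2
      simp only [Set.mem_setOf_eq] at h1
      rw [h2] at h1
      exact h1⟩,
    fun a => ⟨(a.1, b), a.2, rfl⟩, ?_, ?_⟩
  · rintro ⟨⟨a1, b1⟩, hp, rfl⟩; rfl
  · rintro ⟨a, ha⟩; rfl

lemma pairP_subset_bounds {l : ℕ → ℕ} {N n : ℕ} {d : ℕ → ℕ} {R : ℕ} (hl : Antitone l)
    (hR : ∀ i, R ≤ i → l i = 0) {p : (ℕ → ℕ → ℕ) × (ℕ → ℕ)} (hp : PairP l N n d p) :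
    ((∀ k i, p.1 k i ≤ l 0) ∧ (∀ k i, R ≤ i → p.1 k i = 0) ∧ ∀ k, N ≤ k → p.1 k = p.1 N) ∧
    ((∀ k, p.2 k ≤ n) ∧ ∀ k, N ≤ k → p.2 k = p.2 N) := by
  obtain ⟨hch, hw0, hwm, hwN, hsz⟩ := hp
  refine ⟨⟨fun k i => le_trans (hch.le_top k i) (hl (Nat.zero_le i)),
    fun k i hi => ?_, fun k hk => by rw [hch.2.1 k hk, hch.2.1 N le_rfl]⟩,
    ⟨fun k => ?_, fun k hk => by rw [hwN k hk, hwN N le_rfl]⟩⟩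
  · have := hch.le_top k i; have := hR i hi; omega
  · have h1 := hwm (le_max_left k N)
    rwa [hwN (max k N) (le_max_right k N)] at h1

lemma pairP_finite (l : ℕ → ℕ) (N n : ℕ) (d : ℕ → ℕ) (R : ℕ) (hl : Antitone l)
    (hR : ∀ i, R ≤ i → l i = 0) : {p : (ℕ → ℕ → ℕ) × (ℕ → ℕ) | PairP l N n d p}.Finite := by
  apply Set.Finite.subset (Set.Finite.prod (finite_chainlike (l 0) R N) (finite_wlike n N))
  rintro ⟨ν, w⟩ hp
  obtain ⟨⟨b1, b2, b3⟩, ⟨b4, b5⟩⟩ := pairP_subset_bounds hl hR hp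
  exact ⟨⟨b1, b2, b3⟩, ⟨b4, b5⟩⟩

lemma rhsP_finite (l : ℕ → ℕ) (N n : ℕ) (d : ℕ → ℕ) (R : ℕ) (hl : Antitone l)
    (hR : ∀ i, R ≤ i → l i = 0) :
    {q : (ℕ → ℕ) × (ℕ → ℕ → ℕ) | RHSP l N n d q}.Finite := by
  apply Set.Finite.subset (Set.Finite.prod (finite_shlike (l 0 + n) (R+1))
    (finite_chainlike (l 0 + n) (R+1) N))
  rintro ⟨lp, ν⟩ ⟨ha, hint, hsz, hch, hszs⟩
  dsimp only at ha hint hsz hch hszs ⊢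
  have hsupp : ∀ i, R + 1 ≤ i → lp i = 0 := lp_supp l lp R hint.2 hR
  have hb : ∀ i, lp i ≤ l 0 + n := by
    intro i
    have h1 : lp i ≤ lp 0 := ha (Nat.zero_le i)
    have h2 : lp 0 - l 0 ≤ ssz lp l := ssz_single_le lp l (R+1) hint.1 hsupp
    omega
  refine ⟨⟨hb, hsupp⟩, fun k i => le_trans (hch.le_top k i) (hb i),
    fun k i hi => ?_, fun k hk => show ν k = ν N by rw [hch.2.1 k hk, hch.2.1 N le_rfl]⟩
  show ν k i = 0
  have := hch.le_top k i; have := hsupp i hi; omega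

end MainDefs

section MainZero

lemma antitone_empty : Antitone emptyShape := fun _ _ _ => le_rfl

lemma main_zero (l : ℕ → ℕ) (n : ℕ) (d : ℕ → ℕ) :
    Nat.card {p : (ℕ → ℕ → ℕ) × (ℕ → ℕ) // PairP l 0 n d p} =
    Nat.card {q : (ℕ → ℕ) × (ℕ → ℕ → ℕ) // RHSP l 0 n d q} := by
  by_cases hc : l = emptyShape ∧ n = 0 ∧ ∀ k, d k = 0
  · obtain ⟨hl0, hn0, hd0⟩ := hc
    subst hl0; subst hn0
    have h1 : Nat.card {p : (ℕ → ℕ → ℕ) × (ℕ → ℕ) // PairP emptyShape 0 0 d p} = 1 := by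
      apply card_subtype_unique (a := ((fun _ => emptyShape), (fun _ => 0)))
      · refine ⟨⟨rfl, fun k _ => rfl, fun k => antitone_empty, fun k i => le_rfl,
          fun k i => le_rfl⟩, rfl, monotone_const, fun k _ => rfl, fun k => ?_⟩
        rw [ssz_self]
        simpa using (hd0 k).symm
      · rintro ⟨ν, w⟩ ⟨hch, hw0, hwm, hwN, hsz⟩
        have e1 : ν = fun _ => emptyShape := funext fun k => hch.2.1 k (Nat.zero_le k)
        have e2 : w = fun _ => 0 := funext fun k => hwN k (Nat.zero_le k)
        rw [Prod.mk.injEq]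
        exact ⟨e1, e2⟩
    have h2 : Nat.card {q : (ℕ → ℕ) × (ℕ → ℕ → ℕ) // RHSP emptyShape 0 0 d q} = 1 := by
      apply card_subtype_unique (a := (emptyShape, fun _ => emptyShape))
      · refine ⟨antitone_empty, ⟨fun i => le_rfl, fun i => le_rfl⟩, ssz_self _,
          ⟨rfl, fun k _ => rfl, fun k => antitone_empty, fun k i => le_rfl,
            fun k i => le_rfl⟩, fun k => ?_⟩
        rw [ssz_self]
        exact (hd0 k).symm
      · rintro ⟨lp, ν⟩ ⟨ha, hint, hsz, hch, hszs⟩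
        have e1 : lp = emptyShape := (hch.2.1 0 le_rfl).symm.trans hch.1
        have e2 : ν = fun _ => emptyShape := funext fun k => (hch.2.1 k (Nat.zero_le k)).trans e1
        rw [Prod.mk.injEq]
        exact ⟨e1, e2⟩
    rw [h1, h2]
  · have h1 : Nat.card {p : (ℕ → ℕ → ℕ) × (ℕ → ℕ) // PairP l 0 n d p} = 0 := by
      apply card_subtype_empty
      rintro ⟨ν, w⟩ ⟨hch, hw0, hwm, hwN, hsz⟩
      dsimp only at hch hw0 hwm hwN hsz
      apply hc
      have e1 : l = emptyShape := (hch.2.1 0 le_rfl).symm.trans hch.1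
      have e2 : n = 0 := (hwN 0 le_rfl).symm.trans hw0
      refine ⟨e1, e2, fun k => ?_⟩
      have := hsz k
      rw [hch.2.1 (k+1) (Nat.zero_le _), hch.2.1 k (Nat.zero_le _), ssz_self,
        hwN (k+1) (Nat.zero_le _), hwN k (Nat.zero_le _)] at this
      omega
    have h2 : Nat.card {q : (ℕ → ℕ) × (ℕ → ℕ → ℕ) // RHSP l 0 n d q} = 0 := by
      apply card_subtype_empty
      rintro ⟨lp, ν⟩ ⟨ha, hint, hsz, hch, hszs⟩
      dsimp only at ha hint hsz hch hszs
      apply hc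
      have e1 : lp = emptyShape := (hch.2.1 0 le_rfl).symm.trans hch.1
      have e3 : l = emptyShape := by
        funext i
        have := hint.1 i
        rw [e1] at this
        simpa [emptyShape] using this
      have e2 : n = 0 := by
        rw [← hsz, e1, e3, ssz_self]
      refine ⟨e3, e2, fun k => ?_⟩
      have := hszs k
      rw [hch.2.1 (k+1) (Nat.zero_le _), hch.2.1 k (Nat.zero_le _), ssz_self] at this
      omega
    rw [h1, h2]

end MainZero

section Peel

variable {l μ : ℕ → ℕ} {N n c : ℕ} {d : ℕ → ℕ} {ν ν' : ℕ → ℕ → ℕ} {w w' : ℕ → ℕ}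

lemma peel_fwd (hp : PairP l (N+1) n d (ν, w)) :
    (Antitone (ν N) ∧ Interl (ν N) l ∧ w N ≤ n ∧ ssz l (ν N) + (n - w N) = d N) ∧
    PairP (ν N) N (w N) (fun k => if k < N then d k else 0)
      ((fun k => if k < N then ν k else ν N), (fun k => if k < N then w k else w N)) := by
  obtain ⟨hch, hw0, hwm, hwN, hsz⟩ := hp
  dsimp only at hch hw0 hwm hwN hsz
  have htopS : ν (N+1) = l := hch.2.1 (N+1) le_rfl
  have hwS : w (N+1) = n := hwN (N+1) le_rfl
  have hb : ∀ k, k ≤ N → (if k < N then ν k else ν N) = ν k := by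
    intro k hk
    rcases Nat.lt_or_ge k N with h | h
    · rw [if_pos h]
    · rw [if_neg (by omega)]
      have : k = N := by omega
      rw [this]
  have hb2 : ∀ k, N ≤ k → (if k < N then ν k else ν N) = ν N := by
    intro k hk
    rw [if_neg (by omega)]
  have hw1 : ∀ k, k ≤ N → (if k < N then w k else w N) = w k := by
    intro k hk
    rcases Nat.lt_or_ge k N with h | h
    · rw [if_pos h]
    · rw [if_neg (by omega)]
      have : k = N := by omega
      rw [this]
  have hw2 : ∀ k, N ≤ k → (if k < N then w k else w N) = w N := by
    intro k hk
    rw [if_neg (by omega)]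
  simp only [PairP, ChainP0]
  refine ⟨⟨hch.2.2.1 N, ⟨fun i => hch.le_top N i, fun i => ?_⟩, ?_, ?_⟩,
    ⟨?_, fun k hk => ?_, fun k => ?_, fun k i => ?_, fun k i => ?_⟩,
    ?_, ?_, fun k hk => ?_, fun k => ?_⟩
  · have h := hch.2.2.2.2 N i
    rw [htopS] at h
    exact h
  · have := hwm (show N ≤ N + 1 by omega)
    omega
  · have h := hsz N
    rw [htopS, hwS] at h
    exact h
  · (try dsimp only); rw [hb 0 (Nat.zero_le N)]; exact hch.1
  · (try dsimp only); exact hb2 k hk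
  · try dsimp only
    rcases Nat.lt_or_ge k N with h | h
    · rw [hb k (by omega)]; exact hch.2.2.1 k
    · rw [hb2 k h]; exact hch.2.2.1 N
  · try dsimp only
    rcases Nat.lt_or_ge k N with h | h
    · rw [hb k (by omega), hb (k+1) (by omega)]; exact hch.2.2.2.1 k i
    · rw [hb2 k h, hb2 (k+1) (by omega)]
  · try dsimp only
    rcases Nat.lt_or_ge k N with h | h
    · rw [hb k (by omega), hb (k+1) (by omega)]; exact hch.2.2.2.2 k i
    · rw [hb2 k h, hb2 (k+1) (by omega)]; exact hch.2.2.1 N (Nat.le_succ i)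
  · (try dsimp only); rw [hw1 0 (Nat.zero_le N)]; exact hw0
  · apply monotone_nat_of_le_succ
    intro k
    try dsimp only
    rcases Nat.lt_or_ge k N with h | h
    · rw [hw1 k (by omega), hw1 (k+1) (by omega)]; exact hwm (Nat.le_succ k)
    · rw [hw2 k h, hw2 (k+1) (by omega)]
  · (try dsimp only); exact hw2 k hk
  · try dsimp only
    rcases Nat.lt_or_ge k N with h | h
    · rw [hb k (by omega), hb (k+1) (by omega), hw1 k (by omega), hw1 (k+1) (by omega),
        if_pos h]
      exact hsz k
    · rw [hb2 k h, hb2 (k+1) (by omega), hw2 k h, hw2 (k+1) (by omega), ssz_self,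
        if_neg (by omega)]
      omega

lemma peel_bwd (hl : Antitone l) (hd : ∀ k, N + 1 ≤ k → d k = 0)
    (hD : Antitone μ ∧ Interl μ l ∧ c ≤ n ∧ ssz l μ + (n - c) = d N)
    (hp : PairP μ N c (fun k => if k < N then d k else 0) (ν', w')) :
    PairP l (N+1) n d ((fun k => if k < N then ν' k else if k = N then μ else l),
      (fun k => if k < N then w' k else if k = N then c else n)) := by
  obtain ⟨haμ, hiμ, hcn, hszN⟩ := hD
  obtain ⟨hch, hw0, hwm, hwN, hsz⟩ := hp
  dsimp only at hch hw0 hwm hwN hsz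
  have htop' : ∀ k, N ≤ k → ν' k = μ := hch.2.1
  have hwtop' : ∀ k, N ≤ k → w' k = c := hwN
  have hb1 : ∀ k, k ≤ N → (if k < N then ν' k else if k = N then μ else l) = ν' k := by
    intro k hk
    rcases Nat.lt_or_ge k N with h | h
    · rw [if_pos h]
    · have : k = N := by omega
      rw [if_neg (by omega), if_pos this, this, htop' N le_rfl]
  have hb2 : (if N < N then ν' N else if N = N then μ else l) = μ := by
    rw [if_neg (by omega), if_pos rfl]
  have hb3 : ∀ k, N < k → (if k < N then ν' k else if k = N then μ else l) = l := by
    intro k hk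
    rw [if_neg (by omega), if_neg (by omega)]
  have hv1 : ∀ k, k ≤ N → (if k < N then w' k else if k = N then c else n) = w' k := by
    intro k hk
    rcases Nat.lt_or_ge k N with h | h
    · rw [if_pos h]
    · have : k = N := by omega
      rw [if_neg (by omega), if_pos this, this, hwtop' N le_rfl]
  have hv2 : (if N < N then w' N else if N = N then c else n) = c := by
    rw [if_neg (by omega), if_pos rfl]
  have hv3 : ∀ k, N < k → (if k < N then w' k else if k = N then c else n) = n := by
    intro k hk
    rw [if_neg (by omega), if_neg (by omega)]
  simp only [PairP, ChainP0]
  refine ⟨⟨?_, fun k hk => ?_, fun k => ?_, fun k i => ?_, fun k i => ?_⟩,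
    ?_, ?_, fun k hk => ?_, fun k => ?_⟩
  · (try dsimp only); rw [hb1 0 (Nat.zero_le N)]; exact hch.1
  · (try dsimp only); rw [hb3 k (by omega)]
  · try dsimp only
    rcases Nat.lt_trichotomy k N with h | h | h
    · rw [hb1 k (by omega)]; exact hch.2.2.1 k
    · subst h; rw [hb2]; exact haμ
    · rw [hb3 k h]; exact hl
  · try dsimp only
    rcases Nat.lt_trichotomy k N with h | h | h
    · rw [hb1 k (by omega), hb1 (k+1) (by omega)]; exact hch.2.2.2.1 k i
    · subst h; rw [hb2, hb3 (k+1) (by omega)]; exact hiμ.1 i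
    · rw [hb3 k h, hb3 (k+1) (by omega)]
  · try dsimp only
    rcases Nat.lt_trichotomy k N with h | h | h
    · rw [hb1 k (by omega), hb1 (k+1) (by omega)]; exact hch.2.2.2.2 k i
    · subst h; rw [hb2, hb3 (k+1) (by omega)]; exact hiμ.2 i
    · rw [hb3 k h, hb3 (k+1) (by omega)]; exact hl (Nat.le_succ i)
  · (try dsimp only); rw [hv1 0 (Nat.zero_le N)]; exact hw0
  · apply monotone_nat_of_le_succ
    intro k
    try dsimp only
    rcases Nat.lt_trichotomy k N with h | h | h
    · rw [hv1 k (by omega), hv1 (k+1) (by omega)]; exact hwm (Nat.le_succ k)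
    · subst h; rw [hv2, hv3 (k+1) (by omega)]; exact hcn
    · rw [hv3 k h, hv3 (k+1) (by omega)]
  · (try dsimp only); rw [hv3 k (by omega)]
  · try dsimp only
    rcases Nat.lt_trichotomy k N with h | h | h
    · rw [hb1 k (by omega), hb1 (k+1) (by omega), hv1 k (by omega), hv1 (k+1) (by omega)]
      have h2 := hsz k
      rw [if_pos h] at h2
      exact h2
    · subst h; rw [hb2, hb3 (k+1) (by omega), hv2, hv3 (k+1) (by omega)]
      exact hszN
    · rw [hb3 k h, hb3 (k+1) (by omega), hv3 k h, hv3 (k+1) (by omega), ssz_self]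
      have := hd k (by omega)
      omega

lemma peel_pair (l : ℕ → ℕ) (N n : ℕ) (d : ℕ → ℕ) (hl : Antitone l)
    (hd : ∀ k, N + 1 ≤ k → d k = 0) :
    Nat.card {p : (ℕ → ℕ → ℕ) × (ℕ → ℕ) // PairP l (N+1) n d p} =
    Nat.card {x : ((ℕ → ℕ) × ℕ) × ((ℕ → ℕ → ℕ) × (ℕ → ℕ)) //
      (Antitone x.1.1 ∧ Interl x.1.1 l ∧ x.1.2 ≤ n ∧ ssz l x.1.1 + (n - x.1.2) = d N) ∧
      PairP x.1.1 N x.1.2 (fun k => if k < N then d k else 0) x.2} := by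
  apply Nat.card_congr
  refine ⟨fun p => ⟨((p.1.1 N, p.1.2 N),
      ((fun k => if k < N then p.1.1 k else p.1.1 N),
       (fun k => if k < N then p.1.2 k else p.1.2 N))), ?_⟩,
    fun x => ⟨((fun k => if k < N then x.1.2.1 k else if k = N then x.1.1.1 else l),
      (fun k => if k < N then x.1.2.2 k else if k = N then x.1.1.2 else n)), ?_⟩, ?_, ?_⟩
  · obtain ⟨⟨ν, w⟩, hp⟩ := p
    exact peel_fwd hp
  · obtain ⟨⟨⟨μ, cc⟩, ⟨ν', w'⟩⟩, hD, hp⟩ := x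
    exact peel_bwd hl hd hD hp
  · rintro ⟨⟨ν, w⟩, hp⟩
    obtain ⟨hch, hw0, hwm, hwN, hsz⟩ := hp
    dsimp only at hch hw0 hwm hwN hsz
    apply Subtype.ext
    try dsimp only
    rw [Prod.mk.injEq]
    constructor
    · funext k
      rcases Nat.lt_trichotomy k N with h | h | h
      · simp only [if_pos h]
      · subst h
        simp
      · simp only [if_neg (show ¬ k < N by omega), if_neg (show ¬ k = N by omega)]
        exact (hch.2.1 k (by omega)).symm
    · funext k
      rcases Nat.lt_trichotomy k N with h | h | h
      · simp only [if_pos h]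
      · subst h
        simp
      · simp only [if_neg (show ¬ k < N by omega), if_neg (show ¬ k = N by omega)]
        exact (hwN k (by omega)).symm
  · rintro ⟨⟨⟨μ, cc⟩, ⟨ν', w'⟩⟩, hD, hp⟩
    obtain ⟨hch, hw0, hwm, hwN, hsz⟩ := hp
    dsimp only at hch hw0 hwm hwN hsz
    apply Subtype.ext
    try dsimp only
    rw [Prod.mk.injEq, Prod.mk.injEq, Prod.mk.injEq]
    refine ⟨⟨?_, ?_⟩, ?_, ?_⟩
    · simp
    · simp
    · funext k
      rcases Nat.lt_or_ge k N with h | h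
      · simp only [if_pos h]
      · simp only [if_neg (show ¬ k < N by omega)]
        simp only [lt_irrefl, if_false, reduceIte]
        exact (hch.2.1 k h).symm
    · funext k
      rcases Nat.lt_or_ge k N with h | h
      · simp only [if_pos h]
      · simp only [if_neg (show ¬ k < N by omega)]
        simp only [lt_irrefl, if_false, reduceIte]
        exact (hwN k h).symm

end Peel

section RhsPeel

lemma card_eq_of_fibers_snd {A A' B : Type*} (P : A → B → Prop) (Q : A' → B → Prop)
    (hP : {x : A × B | P x.1 x.2}.Finite) (hQ : {x : A' × B | Q x.1 x.2}.Finite)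
    (h : ∀ b, Nat.card {a : A // P a b} = Nat.card {a' : A' // Q a' b}) :
    Nat.card {x : A × B // P x.1 x.2} = Nat.card {x : A' × B // Q x.1 x.2} :=
  card_eq_of_fibers {x : A × B | P x.1 x.2} {x : A' × B | Q x.1 x.2} hP hQ Prod.snd Prod.snd
    (fun b => by rw [card_fiber_snd P b, card_fiber_snd Q b]; exact h b)

lemma card_eq_of_fibers_fst {A B B' : Type*} (D : A → Prop) (P : A → B → Prop)
    (Q : A → B' → Prop)
    (hP : {x : A × B | D x.1 ∧ P x.1 x.2}.Finite) (hQ : {x : A × B' | D x.1 ∧ Q x.1 x.2}.Finite)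
    (h : ∀ a, D a → Nat.card {b : B // P a b} = Nat.card {b' : B' // Q a b'}) :
    Nat.card {x : A × B // D x.1 ∧ P x.1 x.2} = Nat.card {x : A × B' // D x.1 ∧ Q x.1 x.2} :=
  card_eq_of_fibers {x : A × B | D x.1 ∧ P x.1 x.2} {x : A × B' | D x.1 ∧ Q x.1 x.2} hP hQ
    Prod.fst Prod.fst
    (fun a => by
      rw [card_fiber_fst D P a, card_fiber_fst D Q a]
      by_cases hD : D a
      · rw [if_pos hD, if_pos hD]; exact h a hD
      · rw [if_neg hD, if_neg hD])

variable {l lp ρ : ℕ → ℕ} {N n : ℕ} {d : ℕ → ℕ} {ch ν : ℕ → ℕ → ℕ}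

lemma rpeel_fwd (hq1 : Antitone lp) (hq2 : Interl l lp) (hq3 : ssz lp l = n)
    (hq4 : Antitone ρ) (hq5 : Interl ρ lp) (hq6 : ssz lp ρ = d N)
    (hch : ChainP0 emptyShape ρ N ch)
    (hsz : ∀ k, ssz (ch (k+1)) (ch k) = if k < N then d k else 0)
    (hd : ∀ k, N + 1 ≤ k → d k = 0) :
    RHSP l (N+1) n d (lp, fun k => if k < N then ch k else if k = N then ρ else lp) := by
  have htop : ∀ k, N ≤ k → ch k = ρ := hch.2.1
  have hb1 : ∀ k, k ≤ N → (if k < N then ch k else if k = N then ρ else lp) = ch k := by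
    intro k hk
    rcases Nat.lt_or_ge k N with h | h
    · rw [if_pos h]
    · have : k = N := by omega
      rw [if_neg (by omega), if_pos this, this, htop N le_rfl]
  have hb2 : (if N < N then ch N else if N = N then ρ else lp) = ρ := by
    rw [if_neg (by omega), if_pos rfl]
  have hb3 : ∀ k, N < k → (if k < N then ch k else if k = N then ρ else lp) = lp := by
    intro k hk
    rw [if_neg (by omega), if_neg (by omega)]
  refine ⟨hq1, hq2, hq3, ⟨?_, fun k hk => ?_, fun k => ?_, fun k i => ?_, fun k i => ?_⟩,
    fun k => ?_⟩
  · (try dsimp only); rw [hb1 0 (Nat.zero_le N)]; exact hch.1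
  · (try dsimp only); rw [hb3 k (by omega)]
  · (try dsimp only)
    rcases Nat.lt_trichotomy k N with h | h | h
    · rw [hb1 k (by omega)]; exact hch.2.2.1 k
    · subst h; rw [hb2]; exact hq4
    · rw [hb3 k h]; exact hq1
  · (try dsimp only)
    rcases Nat.lt_trichotomy k N with h | h | h
    · rw [hb1 k (by omega), hb1 (k+1) (by omega)]; exact hch.2.2.2.1 k i
    · subst h; rw [hb2, hb3 (k+1) (by omega)]; exact hq5.1 i
    · rw [hb3 k h, hb3 (k+1) (by omega)]
  · (try dsimp only)
    rcases Nat.lt_trichotomy k N with h | h | h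
    · rw [hb1 k (by omega), hb1 (k+1) (by omega)]; exact hch.2.2.2.2 k i
    · subst h; rw [hb2, hb3 (k+1) (by omega)]; exact hq5.2 i
    · rw [hb3 k h, hb3 (k+1) (by omega)]; exact hq1 (Nat.le_succ i)
  · (try dsimp only)
    rcases Nat.lt_trichotomy k N with h | h | h
    · rw [hb1 k (by omega), hb1 (k+1) (by omega)]
      have h2 := hsz k
      rw [if_pos h] at h2
      exact h2
    · subst h; rw [hb2, hb3 (k+1) (by omega)]
      exact hq6
    · rw [hb3 k h, hb3 (k+1) (by omega), ssz_self]
      exact (hd k (by omega)).symm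

lemma rpeel_bwd (hq : RHSP l (N+1) n d (lp, ν)) :
    Antitone lp ∧ Interl l lp ∧ ssz lp l = n ∧ Antitone (ν N) ∧ Interl (ν N) lp ∧
    ssz lp (ν N) = d N ∧
    ChainP0 emptyShape (ν N) N (fun k => if k < N then ν k else ν N) ∧
    (∀ k, ssz ((fun k => if k < N then ν k else ν N) (k+1))
      ((fun k => if k < N then ν k else ν N) k) = if k < N then d k else 0) := by
  obtain ⟨hq1, hq2, hq3, hch, hsz⟩ := hq
  dsimp only at hq1 hq2 hq3 hch hsz
  have htopS : ν (N+1) = lp := hch.2.1 (N+1) le_rfl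
  have hb : ∀ k, k ≤ N → (if k < N then ν k else ν N) = ν k := by
    intro k hk
    rcases Nat.lt_or_ge k N with h | h
    · rw [if_pos h]
    · have : k = N := by omega
      rw [if_neg (by omega), this]
  have hb2 : ∀ k, N ≤ k → (if k < N then ν k else ν N) = ν N := by
    intro k hk
    rw [if_neg (by omega)]
  refine ⟨hq1, hq2, hq3, hch.2.2.1 N, ⟨fun i => ?_, fun i => ?_⟩, ?_,
    ⟨?_, fun k hk => ?_, fun k => ?_, fun k i => ?_, fun k i => ?_⟩, fun k => ?_⟩
  · rw [← htopS]; exact hch.2.2.2.1 N i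
  · rw [← htopS]; exact hch.2.2.2.2 N i
  · have h2 := hsz N
    rw [htopS] at h2
    exact h2
  · (try dsimp only); rw [hb 0 (Nat.zero_le N)]; exact hch.1
  · (try dsimp only); exact hb2 k hk
  · (try dsimp only)
    rcases Nat.lt_or_ge k N with h | h
    · rw [hb k (by omega)]; exact hch.2.2.1 k
    · rw [hb2 k h]; exact hch.2.2.1 N
  · (try dsimp only)
    rcases Nat.lt_or_ge k N with h | h
    · rw [hb k (by omega), hb (k+1) (by omega)]; exact hch.2.2.2.1 k i
    · rw [hb2 k h, hb2 (k+1) (by omega)]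
  · (try dsimp only)
    rcases Nat.lt_or_ge k N with h | h
    · rw [hb k (by omega), hb (k+1) (by omega)]; exact hch.2.2.2.2 k i
    · rw [hb2 k h, hb2 (k+1) (by omega)]; exact hch.2.2.1 N (Nat.le_succ i)
  · (try dsimp only)
    rcases Nat.lt_or_ge k N with h | h
    · rw [hb k (by omega), hb (k+1) (by omega), if_pos h]
      exact hsz k
    · rw [hb2 k h, hb2 (k+1) (by omega), ssz_self, if_neg (by omega)]

lemma rhs_peel (l : ℕ → ℕ) (N n : ℕ) (d : ℕ → ℕ)
    (hd : ∀ k, N + 1 ≤ k → d k = 0) :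
    Nat.card {z : (ℕ → ℕ) × ((ℕ → ℕ) × (ℕ → ℕ → ℕ)) //
      Antitone z.1 ∧ Interl l z.1 ∧ ssz z.1 l = n ∧ Antitone z.2.1 ∧ Interl z.2.1 z.1 ∧
      ssz z.1 z.2.1 = d N ∧ ChainP0 emptyShape z.2.1 N z.2.2 ∧
      (∀ k, ssz (z.2.2 (k+1)) (z.2.2 k) = if k < N then d k else 0)} =
    Nat.card {q : (ℕ → ℕ) × (ℕ → ℕ → ℕ) // RHSP l (N+1) n d q} := by
  apply Nat.card_congr
  refine ⟨fun z => ⟨(z.1.1, fun k => if k < N then z.1.2.2 k else if k = N then z.1.2.1 else z.1.1), ?_⟩,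
    fun q => ⟨(q.1.1, (q.1.2 N, fun k => if k < N then q.1.2 k else q.1.2 N)), ?_⟩, ?_, ?_⟩
  · obtain ⟨⟨lp, ⟨ρ, ch⟩⟩, hq1, hq2, hq3, hq4, hq5, hq6, hch, hsz⟩ := z
    exact rpeel_fwd hq1 hq2 hq3 hq4 hq5 hq6 hch hsz hd
  · obtain ⟨⟨lp, ν⟩, hq⟩ := q
    exact rpeel_bwd hq
  · rintro ⟨⟨lp, ⟨ρ, ch⟩⟩, hq1, hq2, hq3, hq4, hq5, hq6, hch, hsz⟩
    dsimp only at hq1 hq2 hq3 hq4 hq5 hq6 hch hsz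
    have htop : ∀ k, N ≤ k → ch k = ρ := hch.2.1
    apply Subtype.ext
    dsimp only
    rw [Prod.mk.injEq, Prod.mk.injEq]
    refine ⟨rfl, ?_, ?_⟩
    · simp
    · funext k
      rcases Nat.lt_or_ge k N with h | h
      · simp only [if_pos h]
      · simp only [if_neg (show ¬ k < N by omega)]
        simp only [lt_irrefl, if_false, reduceIte]
        exact (htop k h).symm
  · rintro ⟨⟨lp, ν⟩, hq⟩
    obtain ⟨hq1, hq2, hq3, hch, hsz⟩ := hq
    dsimp only at hq1 hq2 hq3 hch hsz
    apply Subtype.ext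
    dsimp only
    rw [Prod.mk.injEq]
    refine ⟨rfl, ?_⟩
    funext k
    rcases Nat.lt_trichotomy k N with h | h | h
    · simp only [if_pos h]
    · subst h
      simp
    · simp only [if_neg (show ¬ k < N by omega), if_neg (show ¬ k = N by omega)]
      exact (hch.2.1 k (by omega)).symm

end RhsPeel

section MainStep

lemma main_succ (N : ℕ)
    (IH : ∀ (l : ℕ → ℕ) (n : ℕ) (d : ℕ → ℕ) (R : ℕ), Antitone l → (∀ i, R ≤ i → l i = 0) →
      Nat.card {p : (ℕ → ℕ → ℕ) × (ℕ → ℕ) // PairP l N n d p} =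
      Nat.card {q : (ℕ → ℕ) × (ℕ → ℕ → ℕ) // RHSP l N n d q})
    (l : ℕ → ℕ) (n : ℕ) (d : ℕ → ℕ) (R : ℕ) (hl : Antitone l) (hR : ∀ i, R ≤ i → l i = 0) :
    Nat.card {p : (ℕ → ℕ → ℕ) × (ℕ → ℕ) // PairP l (N+1) n d p} =
    Nat.card {q : (ℕ → ℕ) × (ℕ → ℕ → ℕ) // RHSP l (N+1) n d q} := by
  by_cases hd : ∀ k, N + 1 ≤ k → d k = 0
  swap
  · push_neg at hd
    obtain ⟨k0, hk0, hne⟩ := hd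
    have h1 : Nat.card {p : (ℕ → ℕ → ℕ) × (ℕ → ℕ) // PairP l (N+1) n d p} = 0 := by
      apply card_subtype_empty
      rintro ⟨ν, w⟩ ⟨hch, hw0, hwm, hwN, hsz⟩
      dsimp only at hch hw0 hwm hwN hsz
      apply hne
      have h2 := hsz k0
      rw [hch.2.1 (k0+1) (by omega), hch.2.1 k0 (by omega), ssz_self,
        hwN (k0+1) (by omega), hwN k0 (by omega)] at h2
      omega
    have h2 : Nat.card {q : (ℕ → ℕ) × (ℕ → ℕ → ℕ) // RHSP l (N+1) n d q} = 0 := by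
      apply card_subtype_empty
      rintro ⟨lp, ν⟩ ⟨hq1, hq2, hq3, hch, hsz⟩
      dsimp only at hq1 hq2 hq3 hch hsz
      apply hne
      have h2 := hsz k0
      rw [hch.2.1 (k0+1) (by omega), hch.2.1 k0 (by omega), ssz_self] at h2
      omega
    rw [h1, h2]
  · have step2 : Nat.card {x : ((ℕ → ℕ) × ℕ) × ((ℕ → ℕ → ℕ) × (ℕ → ℕ)) //
        (Antitone x.1.1 ∧ Interl x.1.1 l ∧ x.1.2 ≤ n ∧ ssz l x.1.1 + (n - x.1.2) = d N) ∧
        PairP x.1.1 N x.1.2 (fun k => if k < N then d k else 0) x.2} =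
      Nat.card {x : ((ℕ → ℕ) × ℕ) × ((ℕ → ℕ) × (ℕ → ℕ → ℕ)) //
        (Antitone x.1.1 ∧ Interl x.1.1 l ∧ x.1.2 ≤ n ∧ ssz l x.1.1 + (n - x.1.2) = d N) ∧
        RHSP x.1.1 N x.1.2 (fun k => if k < N then d k else 0) x.2} := by
      apply card_eq_of_fibers_fst
        (D := fun a : (ℕ → ℕ) × ℕ => Antitone a.1 ∧ Interl a.1 l ∧ a.2 ≤ n ∧ ssz l a.1 + (n - a.2) = d N)
        (P := fun (a : (ℕ → ℕ) × ℕ) (b : (ℕ → ℕ → ℕ) × (ℕ → ℕ)) => PairP a.1 N a.2 (fun k => if k < N then d k else 0) b)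
        (Q := fun (a : (ℕ → ℕ) × ℕ) (b : (ℕ → ℕ) × (ℕ → ℕ → ℕ)) => RHSP a.1 N a.2 (fun k => if k < N then d k else 0) b)
      · apply Set.Finite.subset (Set.Finite.prod
          (Set.Finite.prod (finite_shlike (l 0) R) (Set.finite_Iic n))
          (Set.Finite.prod (finite_chainlike (l 0) R N) (finite_wlike n N)))
        rintro ⟨⟨μ, c⟩, p⟩ ⟨hDa, hp⟩
        dsimp only at hDa hp
        obtain ⟨ha1, ha2, ha3, ha4⟩ := hDa
        have hμsupp : ∀ i, R ≤ i → μ i = 0 := fun i hi => by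
          have := ha2.1 i; have := hR i hi; omega
        have hμb : ∀ i, μ i ≤ l 0 := fun i => le_trans (ha2.1 i) (hl (Nat.zero_le i))
        obtain ⟨⟨b1, b2, b3⟩, b4, b5⟩ := pairP_subset_bounds ha1 hμsupp hp
        refine ⟨⟨⟨hμb, hμsupp⟩, ha3⟩, ⟨⟨fun k i => le_trans (b1 k i) (hμb 0), b2, b3⟩,
          ⟨fun k => le_trans (b4 k) ha3, b5⟩⟩⟩
      · apply Set.Finite.subset (Set.Finite.prod
          (Set.Finite.prod (finite_shlike (l 0) R) (Set.finite_Iic n))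
          (Set.Finite.prod (finite_shlike (l 0 + n) (R+1)) (finite_chainlike (l 0 + n) (R+1) N)))
        rintro ⟨⟨μ, c⟩, ⟨ρ, ch⟩⟩ ⟨hDa, hq⟩
        dsimp only at hDa hq
        obtain ⟨ha1, ha2, ha3, ha4⟩ := hDa
        obtain ⟨hr1, hr2, hr3, hr4, hr5⟩ := hq
        dsimp only at hr1 hr2 hr3 hr4 hr5
        have hμsupp : ∀ i, R ≤ i → μ i = 0 := fun i hi => by
          have := ha2.1 i; have := hR i hi; omega
        have hμb : ∀ i, μ i ≤ l 0 := fun i => le_trans (ha2.1 i) (hl (Nat.zero_le i))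
        have hρsupp : ∀ i, R + 1 ≤ i → ρ i = 0 := lp_supp μ ρ R hr2.2 hμsupp
        have hρb : ∀ i, ρ i ≤ l 0 + n := by
          intro i
          have h1 : ρ i ≤ ρ 0 := hr1 (Nat.zero_le i)
          have h2 : ρ 0 - μ 0 ≤ ssz ρ μ := ssz_single_le ρ μ (R+1) hr2.1 hρsupp
          have := hμb 0
          omega
        refine ⟨⟨⟨hμb, hμsupp⟩, ha3⟩, ⟨⟨hρb, hρsupp⟩,
          ⟨fun k i => le_trans (hr4.le_top k i) (hρb i), fun k i hi => ?_,
            fun k hk => show ch k = ch N by rw [hr4.2.1 k hk, hr4.2.1 N le_rfl]⟩⟩⟩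
        show ch k i = 0
        have := hr4.le_top k i; have := hρsupp i hi; omega
      · rintro ⟨μ, c⟩ hDa
        dsimp only at hDa
        exact IH μ c _ R hDa.1 (fun i hi => by
          have := hDa.2.1.1 i; have := hR i hi; omega)
    have step3 : Nat.card {x : ((ℕ → ℕ) × ℕ) × ((ℕ → ℕ) × (ℕ → ℕ → ℕ)) //
        (Antitone x.1.1 ∧ Interl x.1.1 l ∧ x.1.2 ≤ n ∧ ssz l x.1.1 + (n - x.1.2) = d N) ∧
        RHSP x.1.1 N x.1.2 (fun k => if k < N then d k else 0) x.2} =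
      Nat.card {z : (ℕ → ℕ) × ((ℕ → ℕ) × (ℕ → ℕ → ℕ)) //
        Antitone z.1 ∧ Interl l z.1 ∧ ssz z.1 l = n ∧ Antitone z.2.1 ∧ Interl z.2.1 z.1 ∧
        ssz z.1 z.2.1 = d N ∧ ChainP0 emptyShape z.2.1 N z.2.2 ∧
        (∀ k, ssz (z.2.2 (k+1)) (z.2.2 k) = if k < N then d k else 0)} := by
      apply card_eq_of_fibers_snd
        (P := fun (a : (ℕ → ℕ) × ℕ) (b : (ℕ → ℕ) × (ℕ → ℕ → ℕ)) => (Antitone a.1 ∧ Interl a.1 l ∧ a.2 ≤ n ∧ ssz l a.1 + (n - a.2) = d N) ∧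
          RHSP a.1 N a.2 (fun k => if k < N then d k else 0) b)
        (Q := fun (lp : ℕ → ℕ) (b : (ℕ → ℕ) × (ℕ → ℕ → ℕ)) => Antitone lp ∧ Interl l lp ∧ ssz lp l = n ∧ Antitone b.1 ∧
          Interl b.1 lp ∧ ssz lp b.1 = d N ∧ ChainP0 emptyShape b.1 N b.2 ∧
          (∀ k, ssz (b.2 (k+1)) (b.2 k) = if k < N then d k else 0))
      · apply Set.Finite.subset (Set.Finite.prod
          (Set.Finite.prod (finite_shlike (l 0) R) (Set.finite_Iic n))
          (Set.Finite.prod (finite_shlike (l 0 + n) (R+1)) (finite_chainlike (l 0 + n) (R+1) N)))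
        rintro ⟨⟨μ, c⟩, ⟨ρ, ch⟩⟩ ⟨hDa, hq⟩
        dsimp only at hDa hq
        obtain ⟨ha1, ha2, ha3, ha4⟩ := hDa
        obtain ⟨hr1, hr2, hr3, hr4, hr5⟩ := hq
        dsimp only at hr1 hr2 hr3 hr4 hr5
        have hμsupp : ∀ i, R ≤ i → μ i = 0 := fun i hi => by
          have := ha2.1 i; have := hR i hi; omega
        have hμb : ∀ i, μ i ≤ l 0 := fun i => le_trans (ha2.1 i) (hl (Nat.zero_le i))
        have hρsupp : ∀ i, R + 1 ≤ i → ρ i = 0 := lp_supp μ ρ R hr2.2 hμsupp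
        have hρb : ∀ i, ρ i ≤ l 0 + n := by
          intro i
          have h1 : ρ i ≤ ρ 0 := hr1 (Nat.zero_le i)
          have h2 : ρ 0 - μ 0 ≤ ssz ρ μ := ssz_single_le ρ μ (R+1) hr2.1 hρsupp
          have := hμb 0
          omega
        refine ⟨⟨⟨hμb, hμsupp⟩, ha3⟩, ⟨⟨hρb, hρsupp⟩,
          ⟨fun k i => le_trans (hr4.le_top k i) (hρb i), fun k i hi => ?_,
            fun k hk => show ch k = ch N by rw [hr4.2.1 k hk, hr4.2.1 N le_rfl]⟩⟩⟩
        show ch k i = 0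
        have := hr4.le_top k i; have := hρsupp i hi; omega
      · apply Set.Finite.subset (Set.Finite.prod (finite_shlike (l 0 + n) (R+1))
          (Set.Finite.prod (finite_shlike (l 0 + n) (R+1)) (finite_chainlike (l 0 + n) (R+1) N)))
        rintro ⟨lp, ⟨ρ, ch⟩⟩ ⟨hz1, hz2, hz3, hz4, hz5, hz6, hz7, hz8⟩
        dsimp only at hz1 hz2 hz3 hz4 hz5 hz6 hz7 hz8
        have hlpsupp : ∀ i, R + 1 ≤ i → lp i = 0 := lp_supp l lp R hz2.2 hR
        have hlpb : ∀ i, lp i ≤ l 0 + n := by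
          intro i
          have h1 : lp i ≤ lp 0 := hz1 (Nat.zero_le i)
          have h2 : lp 0 - l 0 ≤ ssz lp l := ssz_single_le lp l (R+1) hz2.1 hlpsupp
          omega
        have hρsupp : ∀ i, R + 1 ≤ i → ρ i = 0 := fun i hi => by
          have := hz5.1 i; have := hlpsupp i hi; omega
        have hρb : ∀ i, ρ i ≤ l 0 + n := fun i => le_trans (hz5.1 i) (hlpb i)
        refine ⟨⟨hlpb, hlpsupp⟩, ⟨⟨hρb, hρsupp⟩,
          ⟨fun k i => le_trans (hz7.le_top k i) (hρb i), fun k i hi => ?_,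
            fun k hk => show ch k = ch N by rw [hz7.2.1 k hk, hz7.2.1 N le_rfl]⟩⟩⟩
        show ch k i = 0
        have := hz7.le_top k i; have := hρsupp i hi; omega
      · rintro ⟨ρ, ch⟩
        by_cases hcond : Antitone ρ ∧ ChainP0 emptyShape ρ N ch ∧
          (∀ k, ssz (ch (k+1)) (ch k) = if k < N then d k else 0) ∧
          (∀ i, R + 1 ≤ i → ρ i = 0)
        · obtain ⟨hc1, hc2, hc3, hc4⟩ := hcond
          have e1 : Nat.card {a : (ℕ → ℕ) × ℕ //
              (Antitone a.1 ∧ Interl a.1 l ∧ a.2 ≤ n ∧ ssz l a.1 + (n - a.2) = d N) ∧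
              RHSP a.1 N a.2 (fun k => if k < N then d k else 0) (ρ, ch)} =
            Nat.card {x : (ℕ → ℕ) × ℕ // Antitone x.1 ∧ Interl x.1 l ∧ Interl x.1 ρ ∧
              x.2 ≤ n ∧ ssz ρ x.1 = x.2 ∧ ssz l x.1 + (n - x.2) = d N} := by
            apply Nat.card_congr
            apply Equiv.subtypeEquivRight
            intro a
            constructor
            · rintro ⟨⟨d1, d2, d3, d4⟩, r1, r2, r3, r4, r5⟩
              exact ⟨d1, d2, r2, d3, r3, d4⟩
            · rintro ⟨a1, a2, a3, a4, a5, a6⟩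
              exact ⟨⟨a1, a2, a4, a6⟩, hc1, a3, a5, hc2, hc3⟩
          have e2 : Nat.card {lp : ℕ → ℕ // Antitone lp ∧ Interl l lp ∧ ssz lp l = n ∧
              Antitone (ρ, ch).1 ∧ Interl (ρ, ch).1 lp ∧ ssz lp (ρ, ch).1 = d N ∧
              ChainP0 emptyShape (ρ, ch).1 N (ρ, ch).2 ∧
              (∀ k, ssz ((ρ, ch).2 (k+1)) ((ρ, ch).2 k) = if k < N then d k else 0)} =
            Nat.card {lp : ℕ → ℕ // Antitone lp ∧ Interl l lp ∧ Interl ρ lp ∧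
              ssz lp l = n ∧ ssz lp ρ = d N} := by
            apply Nat.card_congr
            apply Equiv.subtypeEquivRight
            intro lp
            constructor
            · rintro ⟨a1, a2, a3, a4, a5, a6, a7, a8⟩
              exact ⟨a1, a2, a5, a3, a6⟩
            · rintro ⟨a1, a2, a3, a4, a5⟩
              exact ⟨a1, a2, a4, hc1, a3, a5, hc2, hc3⟩
          rw [e1, e2]
          exact diamond l ρ (R+1) n (d N) hl hc1 (fun i hi => hR i (by omega)) hc4
        · have e1 : Nat.card {a : (ℕ → ℕ) × ℕ //
              (Antitone a.1 ∧ Interl a.1 l ∧ a.2 ≤ n ∧ ssz l a.1 + (n - a.2) = d N) ∧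
              RHSP a.1 N a.2 (fun k => if k < N then d k else 0) (ρ, ch)} = 0 := by
            apply card_subtype_empty
            rintro ⟨μ, c⟩ ⟨⟨d1, d2, d3, d4⟩, r1, r2, r3, r4, r5⟩
            dsimp only at r1 r2 r3 r4 r5 d1 d2
            apply hcond
            refine ⟨r1, r4, r5, ?_⟩
            apply lp_supp μ ρ R r2.2
            intro i hi
            have := d2.1 i; have := hR i hi; omega
          have e2 : Nat.card {lp : ℕ → ℕ // Antitone lp ∧ Interl l lp ∧ ssz lp l = n ∧
              Antitone (ρ, ch).1 ∧ Interl (ρ, ch).1 lp ∧ ssz lp (ρ, ch).1 = d N ∧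
              ChainP0 emptyShape (ρ, ch).1 N (ρ, ch).2 ∧
              (∀ k, ssz ((ρ, ch).2 (k+1)) ((ρ, ch).2 k) = if k < N then d k else 0)} = 0 := by
            apply card_subtype_empty
            rintro lp ⟨a1, a2, a3, a4, a5, a6, a7, a8⟩
            dsimp only at a4 a5 a6 a7 a8
            apply hcond
            refine ⟨a4, a7, a8, ?_⟩
            intro i hi
            have h1 := a5.1 i
            have h2 := lp_supp l lp R a2.2 hR i hi
            omega
          rw [e1, e2]
    calc Nat.card {p : (ℕ → ℕ → ℕ) × (ℕ → ℕ) // PairP l (N+1) n d p}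
        = _ := peel_pair l N n d hl hd
      _ = _ := step2
      _ = _ := step3
      _ = _ := rhs_peel l N n d hd

theorem MAIN (N : ℕ) (l : ℕ → ℕ) (n : ℕ) (d : ℕ → ℕ) (R : ℕ) (hl : Antitone l)
    (hR : ∀ i, R ≤ i → l i = 0) :
    Nat.card {p : (ℕ → ℕ → ℕ) × (ℕ → ℕ) // PairP l N n d p} =
    Nat.card {q : (ℕ → ℕ) × (ℕ → ℕ → ℕ) // RHSP l N n d q} := by
  induction N generalizing l n d R with
  | zero => exact main_zero l n d
  | succ N ih => exact main_succ N (fun l n d R hl hR => ih l n d R hl hR) l n d R hl hR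

end MainStep

section Boundary

lemma ssz_shift (a b : ℕ → ℕ) (R : ℕ) (hba : ∀ i, b i ≤ a i)
    (hsupp : ∀ i, R ≤ i → a i = b i) :
    ssz a b = (a 0 - b 0) + ssz (fun i => a (i+1)) (fun i => b (i+1)) := by
  have h1 : ssz a b = ∑ i ∈ Finset.range (R+1), (a i - b i) :=
    ssz_eq_range a b (R+1) (fun i hi => by rw [hsupp i (by omega)]; omega)
  have h2 : ssz (fun i => a (i+1)) (fun i => b (i+1)) =
      ∑ i ∈ Finset.range R, (a (i+1) - b (i+1)) :=
    ssz_eq_range _ _ R (fun i hi => by rw [hsupp (i+1) (by omega)]; omega)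
  have h3 : ∑ i ∈ Finset.range (R+1), (a i - b i) =
      ∑ i ∈ Finset.range R, (a (i+1) - b (i+1)) + (a 0 - b 0) :=
    Finset.sum_range_succ' (fun i => a i - b i) R
  omega

lemma ssz_cons (x y : ℕ) (a b : ℕ → ℕ) (R : ℕ) (hxy : y ≤ x) (hba : ∀ i, b i ≤ a i)
    (hsupp : ∀ i, R ≤ i → a i = b i) :
    ssz (fun i => if i = 0 then x else a (i-1)) (fun i => if i = 0 then y else b (i-1)) =
    (x - y) + ssz a b := by
  have h1 : ssz (fun i => if i = 0 then x else a (i-1))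
      (fun i => if i = 0 then y else b (i-1)) =
      ∑ i ∈ Finset.range (R+1),
        ((if i = 0 then x else a (i-1)) - (if i = 0 then y else b (i-1))) :=
    ssz_eq_range _ _ (R+1) (fun i hi => by
      rw [if_neg (show i ≠ 0 by omega), if_neg (show i ≠ 0 by omega), hsupp (i-1) (by omega)]
      omega)
  have h2 : ssz a b = ∑ i ∈ Finset.range R, (a i - b i) :=
    ssz_eq_range a b R (fun i hi => by rw [hsupp i hi]; omega)
  have h3 : ∑ i ∈ Finset.range (R+1),
      ((if i = 0 then x else a (i-1)) - (if i = 0 then y else b (i-1))) =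
      ∑ i ∈ Finset.range R,
        ((if i + 1 = 0 then x else a (i+1-1)) - (if i + 1 = 0 then y else b (i+1-1))) +
      ((if (0:ℕ) = 0 then x else a (0-1)) - (if (0:ℕ) = 0 then y else b (0-1))) :=
    Finset.sum_range_succ' _ R
  have h4 : ∑ i ∈ Finset.range R,
      ((if i + 1 = 0 then x else a (i+1-1)) - (if i + 1 = 0 then y else b (i+1-1))) =
      ∑ i ∈ Finset.range R, (a i - b i) := by
    apply Finset.sum_congr rfl
    intro i _
    rw [if_neg (Nat.succ_ne_zero i), if_neg (Nat.succ_ne_zero i)]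
    norm_num
  rw [h1, h3, h4, ← h2]
  rw [if_pos (rfl : (0:ℕ) = 0), if_pos (rfl : (0:ℕ) = 0)]
  omega

lemma catL_eval (l : ℕ → ℕ) (n i : ℕ) :
    catL l (rowShape n) emptyShape 1 i = if i = 0 then l 0 + n else l (i-1) := by
  rcases Nat.eq_zero_or_pos i with h | h
  · subst h
    simp [catL, rowShape, emptyShape]
  · rw [catL, if_neg (by omega), if_neg (by omega)]
    simp [emptyShape]

lemma catM_eval (l : ℕ → ℕ) (i : ℕ) :
    catM l emptyShape emptyShape 1 i = if i = 0 then l 0 else 0 := by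
  rcases Nat.eq_zero_or_pos i with h | h
  · subst h
    simp [catM, emptyShape]
  · rw [catM, if_neg (by omega), if_neg (by omega)]
    simp [emptyShape]

lemma cat_chain (l : ℕ → ℕ) (N n : ℕ) (d : ℕ → ℕ) (R : ℕ) (hl : Antitone l)
    (hR : ∀ i, R ≤ i → l i = 0) :
    Nat.card {ν : ℕ → ℕ → ℕ // ChainP0 (catM l emptyShape emptyShape 1)
        (catL l (rowShape n) emptyShape 1) N ν ∧ ∀ k, ssz (ν (k+1)) (ν k) = d k} =
    Nat.card {p : (ℕ → ℕ → ℕ) × (ℕ → ℕ) // PairP l N n d p} := by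
  have hCL0 : catL l (rowShape n) emptyShape 1 0 = l 0 + n := by rw [catL_eval]; simp
  have hCLs : ∀ i, catL l (rowShape n) emptyShape 1 (i+1) = l i := by
    intro i; rw [catL_eval, if_neg (by omega)]; simp
  have hCM0 : catM l emptyShape emptyShape 1 0 = l 0 := by rw [catM_eval]; simp
  have hCMs : ∀ i, catM l emptyShape emptyShape 1 (i+1) = 0 := by
    intro i; rw [catM_eval, if_neg (by omega)]
  apply Nat.card_congr
  refine ⟨fun x => ⟨((fun k i => x.1 k (i+1)), (fun k => x.1 k 0 - l 0)), ?_⟩,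
    fun p => ⟨(fun k i => if i = 0 then l 0 + p.1.2 k else p.1.1 k (i-1)), ?_⟩, ?_, ?_⟩
  · obtain ⟨ν, hch, hsz⟩ := x
    refine ⟨⟨?_, fun k hk => ?_, fun k => ?_, fun k i => ?_, fun k i => ?_⟩,
      ?_, ?_, fun k hk => ?_, fun k => ?_⟩
    · funext i
      (try dsimp only)
      rw [congrFun hch.1 (i+1), hCMs i]
      rfl
    · funext i
      (try dsimp only)
      rw [congrFun (hch.2.1 k hk) (i+1), hCLs i]
    · intro a b hab
      exact hch.2.2.1 k (Nat.succ_le_succ hab)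
    · exact hch.2.2.2.1 k (i+1)
    · exact hch.2.2.2.2 k (i+1)
    · (try dsimp only)
      have h1 := congrFun hch.1 0
      rw [hCM0] at h1
      omega
    · apply monotone_nat_of_le_succ
      intro k
      (try dsimp only)
      have := hch.2.2.2.1 k 0
      omega
    · (try dsimp only)
      have h1 := congrFun (hch.2.1 k hk) 0
      rw [hCL0] at h1
      omega
    · (try dsimp only)
      have hsub : ∀ i, ν k i ≤ ν (k+1) i := hch.2.2.2.1 k
      have hsupp : ∀ i, R + 2 ≤ i → ν (k+1) i = ν k i := by
        intro i hi
        obtain ⟨j, rfl⟩ : ∃ j, i = j + 1 := ⟨i - 1, by omega⟩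
        have h1 := hch.le_top (k+1) (j+1)
        have h2 := hch.le_top k (j+1)
        rw [hCLs j] at h1 h2
        have h3 := hR j (by omega)
        have h4 := hch.ge_base (k+1) (j+1)
        have h5 := hch.ge_base k (j+1)
        omega
      have heq := ssz_shift (ν (k+1)) (ν k) (R+2) hsub hsupp
      have h1 := hch.ge_base k 0
      have h2 := hch.ge_base (k+1) 0
      rw [hCM0] at h1 h2
      have h3 := hsz k
      omega
  · obtain ⟨⟨νp, w⟩, hp⟩ := p
    obtain ⟨hch, hw0, hwm, hwN, hsz⟩ := hp
    dsimp only at hch hw0 hwm hwN hsz ⊢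
    have hvs : ∀ k i, (if i + 1 = 0 then l 0 + w k else νp k (i+1-1)) = νp k i := by
      intro k i
      rw [if_neg (Nat.succ_ne_zero i)]
      norm_num
    refine ⟨⟨?_, fun k hk => ?_, fun k => ?_, fun k i => ?_, fun k i => ?_⟩, fun k => ?_⟩
    · funext i
      (try dsimp only)
      cases i with
      | zero =>
        rw [if_pos rfl, hw0, hCM0]
        omega
      | succ i =>
        rw [hvs 0 i, congrFun hch.1 i, hCMs i]
        rfl
    · funext i
      (try dsimp only)
      cases i with
      | zero =>
        rw [if_pos rfl, hwN k hk, hCL0]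
      | succ i =>
        rw [hvs k i, congrFun (hch.2.1 k hk) i, hCLs i]
    · apply antitone_nat_of_succ_le
      intro i
      (try dsimp only)
      cases i with
      | zero =>
        rw [hvs k 0, if_pos rfl]
        have := hch.le_top k 0
        omega
      | succ i =>
        rw [hvs k (i+1), hvs k i]
        exact hch.2.2.1 k (Nat.le_succ i)
    · (try dsimp only)
      cases i with
      | zero =>
        rw [if_pos rfl, if_pos rfl]
        have := hwm (show k ≤ k + 1 by omega)
        omega
      | succ i =>
        rw [hvs k i, hvs (k+1) i]
        exact hch.2.2.2.1 k i
    · (try dsimp only)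
      cases i with
      | zero =>
        rw [hvs (k+1) 0, if_pos rfl]
        have := hch.le_top (k+1) 0
        omega
      | succ i =>
        rw [hvs (k+1) (i+1), hvs k i]
        exact hch.2.2.2.2 k i
    · (try dsimp only)
      have hxy : l 0 + w k ≤ l 0 + w (k+1) := by have := hwm (show k ≤ k + 1 by omega); omega
      have hba : ∀ i, νp k i ≤ νp (k+1) i := hch.2.2.2.1 k
      have hsupp : ∀ i, R ≤ i → νp (k+1) i = νp k i := by
        intro i hi
        have h1 := hch.le_top (k+1) i
        have h2 := hch.le_top k i
        have h3 := hR i hi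
        omega
      rw [ssz_cons (l 0 + w (k+1)) (l 0 + w k) (νp (k+1)) (νp k) R hxy hba hsupp]
      have := hsz k
      omega
  · rintro ⟨ν, hch, hsz⟩
    apply Subtype.ext
    (try dsimp only)
    funext k i
    cases i with
    | zero =>
      rw [if_pos rfl]
      have h1 := hch.ge_base k 0
      rw [hCM0] at h1
      omega
    | succ i =>
      rw [if_neg (Nat.succ_ne_zero i)]
      norm_num
  · rintro ⟨⟨νp, w⟩, hp⟩
    apply Subtype.ext
    (try dsimp only)
    rw [Prod.mk.injEq]
    constructor
    · funext k i
      rw [if_neg (Nat.succ_ne_zero i)]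
      norm_num
    · funext k
      rw [if_pos rfl]
      omega

lemma rhs_to_finsum (l : ℕ → ℕ) (N n : ℕ) (d : ℕ → ℕ) (R : ℕ) (hl : Antitone l)
    (hR : ∀ i, R ≤ i → l i = 0) :
    Nat.card {q : (ℕ → ℕ) × (ℕ → ℕ → ℕ) // RHSP l N n d q} =
    ∑ᶠ (lp : ℕ → ℕ) (_ : IsPartition lp ∧ IsHorizontalStrip l lp ∧ shapeSize lp l = n),
      Nat.card {ν : ℕ → ℕ → ℕ // ChainP0 emptyShape lp N ν ∧
        ∀ k, ssz (ν (k+1)) (ν k) = d k} := by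
  have h0 : Nat.card {q : (ℕ → ℕ) × (ℕ → ℕ → ℕ) // RHSP l N n d q} =
      ∑ᶠ lp : ℕ → ℕ, Nat.card {q : (ℕ → ℕ) × (ℕ → ℕ → ℕ) //
        q ∈ {q : (ℕ → ℕ) × (ℕ → ℕ → ℕ) | RHSP l N n d q} ∧ q.1 = lp} :=
    card_eq_finsum_fibers _ (rhsP_finite l N n d R hl hR) Prod.fst
  rw [h0]
  apply finsum_congr
  intro lp
  rw [finsum_eq_if]
  by_cases hP : IsPartition lp ∧ IsHorizontalStrip l lp ∧ shapeSize lp l = n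
  · rw [if_pos hP]
    obtain ⟨⟨halp, R', hR'⟩, hstrip, hsize⟩ := hP
    have hint : Interl l lp := (interl_iff_strip l lp hl halp).1 hstrip
    have hssz : shapeSize lp l = ssz lp l := shapeSize_eq_ssz lp l R' hint.1 hR'
    apply Nat.card_congr
    refine ⟨fun q => ⟨q.1.2, ?_⟩, fun ν => ⟨(lp, ν.1), ⟨?_, ?_, ?_, ?_, ?_⟩, rfl⟩, ?_, ?_⟩
    · obtain ⟨⟨lp', ν⟩, hq, heq⟩ := q
      dsimp only at heq
      subst heq
      exact ⟨hq.2.2.2.1, hq.2.2.2.2⟩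
    · exact halp
    · exact hint
    · rw [← hssz]; exact hsize
    · exact ν.2.1
    · exact ν.2.2
    · rintro ⟨⟨lp', ν⟩, hq, heq⟩
      dsimp only at heq
      subst heq
      rfl
    · rintro ⟨ν, hν⟩
      rfl
  · rw [if_neg hP]
    apply card_subtype_empty
    rintro ⟨lp', ν⟩ ⟨hq, heq⟩
    dsimp only at heq
    subst heq
    obtain ⟨hq1, hq2, hq3, hq4, hq5⟩ := hq
    apply hP
    have hsupp : ∀ i, R + 1 ≤ i → lp' i = 0 := lp_supp l lp' R hq2.2 hR
    refine ⟨⟨hq1, R+1, hsupp⟩, (interl_iff_strip l lp' hl hq1).2 hq2, ?_⟩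
    rw [shapeSize_eq_ssz lp' l (R+1) hq2.1 hsupp]
    exact hq3

end Boundary


/-- **Content-preserving bijective form of the Pieri rule.** For every bound `N`
and every content `d`, the number of SSYT of the diagonal concatenation shape
`λ*(n)` with entries at most `N` and content `d` equals the sum, over all
partitions `λ⁺` with `λ⁺/λ` a horizontal strip of size `n`, of the number of
SSYT of shape `λ⁺` with entries at most `N` and content `d`. -/
theorem pieri_bijective (l : ℕ → ℕ) (hl : IsPartition l) (n : ℕ) (hn : 0 < n)
    (N : ℕ) (d : ℕ →₀ ℕ) :
    Nat.card {T : SkewSSYT (catL l (rowShape n) emptyShape 1) (catM l emptyShape emptyShape 1) //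
        (∀ i j, cellOf (catL l (rowShape n) emptyShape 1) (catM l emptyShape emptyShape 1) i j →
          T.entry i j ≤ N) ∧
        ∀ k, contentOf (catL l (rowShape n) emptyShape 1) (catM l emptyShape emptyShape 1)
          T.entry k = d k} =
      ∑ᶠ (lp : ℕ → ℕ)
        (_ : IsPartition lp ∧ IsHorizontalStrip l lp ∧ shapeSize lp l = n),
        Nat.card {T : SkewSSYT lp emptyShape //
          (∀ i j, cellOf lp emptyShape i j → T.entry i j ≤ N) ∧
          ∀ k, contentOf lp emptyShape T.entry k = d k} := by
  obtain ⟨hla, R, hR⟩ := hl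
  have hCLanti : Antitone (catL l (rowShape n) emptyShape 1) := by
    apply antitone_nat_of_succ_le
    intro i
    rw [catL_eval]
    cases i with
    | zero => rw [catL_eval, if_pos rfl, if_neg (by omega)]; simp
    | succ i => rw [catL_eval, if_neg (by omega), if_neg (by omega)]; simp; exact hla (by omega)
  have hCManti : Antitone (catM l emptyShape emptyShape 1) := by
    apply antitone_nat_of_succ_le
    intro i
    rw [catM_eval, catM_eval, if_neg (by omega)]
    omega
  have hsub : SubShape (catM l emptyShape emptyShape 1) (catL l (rowShape n) emptyShape 1) := by
    intro i
    rw [catM_eval, catL_eval]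
    rcases Nat.eq_zero_or_pos i with h | h
    · subst h; simp
    · rw [if_neg (by omega), if_neg (by omega)]; omega
  have hCLsupp : ∀ i, R + 1 ≤ i → catL l (rowShape n) emptyShape 1 i = 0 := by
    intro i hi
    rw [catL_eval, if_neg (by omega)]
    exact hR (i-1) (by omega)
  calc Nat.card {T : SkewSSYT (catL l (rowShape n) emptyShape 1)
          (catM l emptyShape emptyShape 1) //
        (∀ i j, cellOf (catL l (rowShape n) emptyShape 1) (catM l emptyShape emptyShape 1) i j →
          T.entry i j ≤ N) ∧
        ∀ k, contentOf (catL l (rowShape n) emptyShape 1) (catM l emptyShape emptyShape 1)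
          T.entry k = d k}
      = Nat.card {ν : ℕ → ℕ → ℕ // ChainP0 (catM l emptyShape emptyShape 1)
          (catL l (rowShape n) emptyShape 1) N ν ∧ ∀ k, ssz (ν (k+1)) (ν k) = d k} :=
        card_tab_eq_chain _ _ hCLanti hCManti hsub (R+1) hCLsupp N (fun k => d k)
    _ = Nat.card {p : (ℕ → ℕ → ℕ) × (ℕ → ℕ) // PairP l N n (fun k => d k) p} :=
        cat_chain l N n (fun k => d k) R hla hR
    _ = Nat.card {q : (ℕ → ℕ) × (ℕ → ℕ → ℕ) // RHSP l N n (fun k => d k) q} :=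
        MAIN N l n (fun k => d k) R hla hR
    _ = ∑ᶠ (lp : ℕ → ℕ) (_ : IsPartition lp ∧ IsHorizontalStrip l lp ∧ shapeSize lp l = n),
          Nat.card {ν : ℕ → ℕ → ℕ // ChainP0 emptyShape lp N ν ∧
            ∀ k, ssz (ν (k+1)) (ν k) = d k} :=
        rhs_to_finsum l N n (fun k => d k) R hla hR
    _ = _ := by
        apply finsum_congr
        intro lp
        rw [finsum_eq_if, finsum_eq_if]
        by_cases hP : IsPartition lp ∧ IsHorizontalStrip l lp ∧ shapeSize lp l = n
        · rw [if_pos hP, if_pos hP]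
          obtain ⟨⟨halp, R', hR'⟩, _, _⟩ := hP
          exact (card_tab_eq_chain lp emptyShape halp antitone_empty
            (fun i => Nat.zero_le _) R' hR' N (fun k => d k)).symm
        · rw [if_neg hP, if_neg hP]
end

section
/- For a skew SSYT T, if reverse row insertions are performed from two outside corners c and c' with c strictly left of c', first T → c' (final entry k') then (T → c') → c (final entry k), then the reverse bumping path of the second is strictly left of that of the first in every row they both occupy; and if both land in row 0 then k ≤ k'. -/
open scoped Classical

/-! ### Row insertion and reverse row insertion for skew tableaux

Fillings are given by raw data: shape functions `l m : ℕ → ℕ` and an entry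
function `e : ℕ → ℕ → ℕ` (zero outside the shape).  Rows are indexed from `0`
(the bottom row in French notation); the paper's "row `r`" is row `r - 1` here,
and its "row `0`" (external) lies below row `0`. -/

section Insertion

/-- `e` is a semistandard filling of the skew shape `l / m`. -/
def IsSSYTFilling (l m : ℕ → ℕ) (e : ℕ → ℕ → ℕ) : Prop :=
  (∀ i j, cellOf l m i j → 0 < e i j) ∧
  (∀ i j, ¬ cellOf l m i j → e i j = 0) ∧
  (∀ i j j', j ≤ j' → cellOf l m i j → cellOf l m i j' → e i j ≤ e i j') ∧
  (∀ i j, cellOf l m i j → cellOf l m (i + 1) j → e i j < e (i + 1) j)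

/-- Row `i` contains an entry strictly larger than the incoming value `v`. -/
def Bumpable (l m : ℕ → ℕ) (e : ℕ → ℕ → ℕ) (i v : ℕ) : Prop :=
  ∃ j, cellOf l m i j ∧ v < e i j

/-- The column of row `i` affected when the value `v` is inserted into row `i`:
the leftmost cell whose entry exceeds `v`, or the cell appended at the right
end of the row (column `l i`) if no entry exceeds `v`. -/
noncomputable def bcol (l m : ℕ → ℕ) (e : ℕ → ℕ → ℕ) (i v : ℕ) : ℕ :=
  if Bumpable l m e i v then sInf {j | cellOf l m i j ∧ v < e i j} else l i

/-- The successive values bumped during row insertion of `k` starting at row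
`s`: `ivalF l m e s k t` is the value entering row `s + t`. -/
noncomputable def ivalF (l m : ℕ → ℕ) (e : ℕ → ℕ → ℕ) (s k : ℕ) : ℕ → ℕ
  | 0 => k
  | t + 1 =>
      if Bumpable l m e (s + t) (ivalF l m e s k t) then
        e (s + t) (bcol l m e (s + t) (ivalF l m e s k t))
      else ivalF l m e s k t

/-- The number of bumping steps: insertion starting at row `s` terminates at
row `s + stopF`, where the incoming value comes to rest at the end of the row. -/
noncomputable def stopF (l m : ℕ → ℕ) (e : ℕ → ℕ → ℕ) (s k : ℕ) : ℕ :=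
  sInf {t | ¬ Bumpable l m e (s + t) (ivalF l m e s k t)}

/-- The column of the bumping path in row `s + t`. -/
noncomputable def pcolF (l m : ℕ → ℕ) (e : ℕ → ℕ → ℕ) (s k t : ℕ) : ℕ :=
  bcol l m e (s + t) (ivalF l m e s k t)

/-- The outer shape after row insertion: one cell is added at the end of the
terminating row. -/
noncomputable def insShapeL (l m : ℕ → ℕ) (e : ℕ → ℕ → ℕ) (s k : ℕ) : ℕ → ℕ :=
  Function.update l (s + stopF l m e s k) (l (s + stopF l m e s k) + 1)

/-- The entries after row insertion of `k` starting at row `s`. -/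
noncomputable def insEntry (l m : ℕ → ℕ) (e : ℕ → ℕ → ℕ) (s k : ℕ) : ℕ → ℕ → ℕ :=
  fun i j =>
    if s ≤ i ∧ i - s ≤ stopF l m e s k ∧ j = pcolF l m e s k (i - s) then
      ivalF l m e s k (i - s)
    else e i j

/-- The bumping path of the row insertion of `k` starting at row `s`: the set
of cells whose entries change (including the newly filled cell). -/
noncomputable def bumpPath (l m : ℕ → ℕ) (e : ℕ → ℕ → ℕ) (s k : ℕ) : Set (ℕ × ℕ) :=
  {p | ∃ t ≤ stopF l m e s k, p = (s + t, pcolF l m e s k t)}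

/-- An inside corner: a cell with no cell of the shape immediately below or to
its left. -/
def IsInsideCorner (l m : ℕ → ℕ) (i j : ℕ) : Prop :=
  cellOf l m i j ∧ j = m i ∧ (i = 0 ∨ ¬ cellOf l m (i - 1) j)

/-- An outside corner: a cell with no cell of the shape immediately above or to
its right. -/
def IsOutsideCorner (l m : ℕ → ℕ) (i j : ℕ) : Prop :=
  cellOf l m i j ∧ j + 1 = l i ∧ ¬ cellOf l m (i + 1) j

/-- Row `i` contains an entry strictly smaller than the current value `v`. -/
def RBumpable (l m : ℕ → ℕ) (e : ℕ → ℕ → ℕ) (i v : ℕ) : Prop :=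
  ∃ j, cellOf l m i j ∧ e i j < v

/-- The column of row `i` affected during reverse row insertion when the value
`v` reaches row `i`: the rightmost cell whose entry is smaller than `v`, or the
cell added at the left end of the row (column `m i - 1`) if `v` is weakly
smaller than all entries of the row (landing there). -/
noncomputable def rcol (l m : ℕ → ℕ) (e : ℕ → ℕ → ℕ) (i v : ℕ) : ℕ :=
  if RBumpable l m e i v then sSup {j | cellOf l m i j ∧ e i j < v} else m i - 1

/-- The successive values during reverse row insertion starting from the cell
`(r, j₀)`: `rvalF l m e r j₀ t` is the value entering row `r - 1 - t` (the
value after `t` bumping steps). -/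
noncomputable def rvalF (l m : ℕ → ℕ) (e : ℕ → ℕ → ℕ) (r j₀ : ℕ) : ℕ → ℕ
  | 0 => e r j₀
  | t + 1 =>
      if RBumpable l m e (r - 1 - t) (rvalF l m e r j₀ t) then
        e (r - 1 - t) (rcol l m e (r - 1 - t) (rvalF l m e r j₀ t))
      else rvalF l m e r j₀ t

/-- The number of bumping steps of the reverse row insertion from `(r, j₀)`:
if `rstop = r` the value passes through every lower row and exits (it "lands in
row 0" in the paper's numbering); if `rstop < r` the value lands internally in
row `r - 1 - rstop` (the paper's row `r - rstop`). -/
noncomputable def rstop (l m : ℕ → ℕ) (e : ℕ → ℕ → ℕ) (r j₀ : ℕ) : ℕ :=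
  sInf ({t | t < r ∧ ¬ RBumpable l m e (r - 1 - t) (rvalF l m e r j₀ t)} ∪ {r})

/-- The reverse row insertion from `(r, j₀)` lands externally ("in row 0"). -/
noncomputable def LandsExternally (l m : ℕ → ℕ) (e : ℕ → ℕ → ℕ) (r j₀ : ℕ) : Prop :=
  rstop l m e r j₀ = r

/-- The final entry of the reverse row insertion from `(r, j₀)`. -/
noncomputable def finalEntry (l m : ℕ → ℕ) (e : ℕ → ℕ → ℕ) (r j₀ : ℕ) : ℕ :=
  rvalF l m e r j₀ (rstop l m e r j₀)

/-- The number of cells (beyond the starting corner) on the reverse bumping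
path: the landing cell is part of the path when the landing is internal. -/
noncomputable def rlen (l m : ℕ → ℕ) (e : ℕ → ℕ → ℕ) (r j₀ : ℕ) : ℕ :=
  if rstop l m e r j₀ = r then rstop l m e r j₀ else rstop l m e r j₀ + 1

/-- The column of the reverse bumping path in row `r - t`. -/
noncomputable def rpcol (l m : ℕ → ℕ) (e : ℕ → ℕ → ℕ) (r j₀ t : ℕ) : ℕ :=
  if t = 0 then j₀ else rcol l m e (r - t) (rvalF l m e r j₀ (t - 1))

/-- The reverse bumping path of the reverse row insertion from `(r, j₀)`: the
set of cells whose entries change (including the removed corner and, for an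
internal landing, the newly filled cell). -/
noncomputable def rbumpPath (l m : ℕ → ℕ) (e : ℕ → ℕ → ℕ) (r j₀ : ℕ) : Set (ℕ × ℕ) :=
  {p | ∃ t ≤ rlen l m e r j₀, p = (r - t, rpcol l m e r j₀ t)}

/-- The outer shape after reverse row insertion from the outside corner
`(r, j₀)`: the corner is removed. -/
noncomputable def rinsShapeL (l m : ℕ → ℕ) (e : ℕ → ℕ → ℕ) (r j₀ : ℕ) : ℕ → ℕ :=
  Function.update l r (l r - 1)

/-- The inner shape after reverse row insertion from `(r, j₀)`: unchanged for
an external landing; for an internal landing in row `r - 1 - rstop` a cell is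
added at the left end of that row. -/
noncomputable def rinsShapeM (l m : ℕ → ℕ) (e : ℕ → ℕ → ℕ) (r j₀ : ℕ) : ℕ → ℕ :=
  if rstop l m e r j₀ = r then m
  else Function.update m (r - 1 - rstop l m e r j₀) (m (r - 1 - rstop l m e r j₀) - 1)

/-- The entries after reverse row insertion from `(r, j₀)`. -/
noncomputable def rinsEntry (l m : ℕ → ℕ) (e : ℕ → ℕ → ℕ) (r j₀ : ℕ) : ℕ → ℕ → ℕ :=
  fun i j =>
    if i ≤ r ∧ r - i ≤ rlen l m e r j₀ ∧ j = rpcol l m e r j₀ (r - i) then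
      (if r - i = 0 then 0 else rvalF l m e r j₀ (r - i - 1))
    else e i j

end Insertion


section Generic

variable (l m : ℕ → ℕ) (e : ℕ → ℕ → ℕ)

lemma rcol_bddAbove (i v : ℕ) : BddAbove {j | cellOf l m i j ∧ e i j < v} :=
  ⟨l i, fun _ hj => le_of_lt hj.1.2⟩

lemma rcol_spec {i v : ℕ} (h : RBumpable l m e i v) :
    cellOf l m i (rcol l m e i v) ∧ e i (rcol l m e i v) < v := by
  rw [rcol, if_pos h]
  exact Nat.sSup_mem h (rcol_bddAbove l m e i v)

lemma le_rcol {i v j : ℕ} (h : RBumpable l m e i v) (hc : cellOf l m i j)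
    (he : e i j < v) : j ≤ rcol l m e i v := by
  rw [rcol, if_pos h]
  exact le_csSup (rcol_bddAbove l m e i v) ⟨hc, he⟩

lemma rcol_of_not {i v : ℕ} (h : ¬ RBumpable l m e i v) : rcol l m e i v = m i - 1 := by
  rw [rcol, if_neg h]

variable (r j₀ : ℕ)

lemma rstop_le_self : rstop l m e r j₀ ≤ r := Nat.sInf_le (by simp [rstop])

lemma rbump_of_lt {t : ℕ} (h : t < rstop l m e r j₀) :
    RBumpable l m e (r - 1 - t) (rvalF l m e r j₀ t) := by
  have h2 : t < r := lt_of_lt_of_le h (rstop_le_self l m e r j₀)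
  by_contra hn
  have hmem : t ∈ ({t | t < r ∧ ¬ RBumpable l m e (r - 1 - t) (rvalF l m e r j₀ t)} ∪ {r} : Set ℕ) :=
    Or.inl ⟨h2, hn⟩
  have := Nat.sInf_le hmem
  rw [← rstop] at this
  omega

lemma not_rbump_at (h : rstop l m e r j₀ < r) :
    ¬ RBumpable l m e (r - 1 - rstop l m e r j₀) (rvalF l m e r j₀ (rstop l m e r j₀)) := by
  have hne : ({t | t < r ∧ ¬ RBumpable l m e (r - 1 - t) (rvalF l m e r j₀ t)} ∪ {r} : Set ℕ).Nonempty :=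
    ⟨r, Or.inr rfl⟩
  have hmem := Nat.sInf_mem hne
  rw [← rstop] at hmem
  rcases hmem with h1 | h1
  · exact h1.2
  · simp only [Set.mem_singleton_iff] at h1; omega

lemma rvalF_succ {t : ℕ} (h : t < rstop l m e r j₀) :
    rvalF l m e r j₀ (t + 1) =
      e (r - 1 - t) (rcol l m e (r - 1 - t) (rvalF l m e r j₀ t)) := by
  rw [rvalF, if_pos (rbump_of_lt l m e r j₀ h)]

lemma rlen_le_self : rlen l m e r j₀ ≤ r := by
  have := rstop_le_self l m e r j₀
  unfold rlen; split <;> omega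

lemma rlen_cases :
    (rstop l m e r j₀ = r ∧ rlen l m e r j₀ = rstop l m e r j₀) ∨
      (rstop l m e r j₀ < r ∧ rlen l m e r j₀ = rstop l m e r j₀ + 1) := by
  have := rstop_le_self l m e r j₀
  unfold rlen; split <;> omega

lemma cell_rpcol (hcell : cellOf l m r j₀) {s : ℕ} (hs : s ≤ rstop l m e r j₀) :
    cellOf l m (r - s) (rpcol l m e r j₀ s) ∧
      rvalF l m e r j₀ s = e (r - s) (rpcol l m e r j₀ s) := by
  cases s with
  | zero => exact ⟨by simpa [rpcol] using hcell, by simp [rpcol, rvalF]⟩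
  | succ t =>
      have hlt : t < rstop l m e r j₀ := hs
      have hb := rbump_of_lt l m e r j₀ hlt
      have hspec := rcol_spec l m e hb
      have hr1 : r - 1 - t = r - (t + 1) := by omega
      constructor
      · have h1 := hspec.1
        rw [hr1] at h1
        simpa [rpcol] using h1
      · rw [rvalF_succ l m e r j₀ hlt, hr1]
        simp [rpcol]

lemma rpcol_max {s j : ℕ} (hs : s < rstop l m e r j₀) (hc : cellOf l m (r - (s + 1)) j)
    (hj : rpcol l m e r j₀ (s + 1) < j) : rvalF l m e r j₀ s ≤ e (r - (s + 1)) j := by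
  by_contra h
  push_neg at h
  have hb := rbump_of_lt l m e r j₀ hs
  rw [show r - 1 - s = r - (s + 1) by omega] at hb
  have h1 := le_rcol l m e hb hc h
  have h2 : rpcol l m e r j₀ (s + 1) = rcol l m e (r - (s + 1)) (rvalF l m e r j₀ s) := by
    simp [rpcol]
  omega

lemma rpcol_mono (hlant : Antitone l)
    (hcol : ∀ i j, cellOf l m i j → cellOf l m (i + 1) j → e i j < e (i + 1) j)
    (hcell : cellOf l m r j₀) {s : ℕ} (hs : s + 1 ≤ rlen l m e r j₀) :
    rpcol l m e r j₀ s ≤ rpcol l m e r j₀ (s + 1) := by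
  have hstop := rstop_le_self l m e r j₀
  have hrlen := rlen_le_self l m e r j₀
  have hsS : s ≤ rstop l m e r j₀ := by
    rcases rlen_cases l m e r j₀ with ⟨h1, h2⟩ | ⟨h1, h2⟩ <;> omega
  have hsr : s < r := by omega
  obtain ⟨hcB, hvB⟩ := cell_rpcol l m e r j₀ hcell hsS
  have hup : r - (s + 1) + 1 = r - s := by omega
  have h2 : rpcol l m e r j₀ (s + 1) = rcol l m e (r - (s + 1)) (rvalF l m e r j₀ s) := by
    simp [rpcol]
  by_cases hcb : cellOf l m (r - (s + 1)) (rpcol l m e r j₀ s)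
  · have hltv : e (r - (s + 1)) (rpcol l m e r j₀ s) < rvalF l m e r j₀ s := by
      rw [hvB]
      have h4 := hcol _ _ hcb (by rw [hup]; exact hcB)
      rw [hup] at h4; exact h4
    rcases lt_or_eq_of_le hsS with hlt2 | heq
    · have hb := rbump_of_lt l m e r j₀ hlt2
      rw [show r - 1 - s = r - (s + 1) by omega] at hb
      rw [h2]; exact le_rcol l m e hb hcb hltv
    · exfalso
      have hSr : rstop l m e r j₀ < r := by omega
      have hnb := not_rbump_at l m e r j₀ hSr
      rw [← heq, show r - 1 - s = r - (s + 1) by omega] at hnb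
      exact hnb ⟨_, hcb, hltv⟩
  · have hjl : rpcol l m e r j₀ s < l (r - (s + 1)) :=
      lt_of_lt_of_le hcB.2 (hlant (by omega : r - (s + 1) ≤ r - s))
    have hmgt : rpcol l m e r j₀ s < m (r - (s + 1)) := by
      by_contra hh; push_neg at hh; exact hcb ⟨hh, hjl⟩
    rcases lt_or_eq_of_le hsS with hlt2 | heq
    · have hb := rbump_of_lt l m e r j₀ hlt2
      rw [show r - 1 - s = r - (s + 1) by omega] at hb
      have h3 := (rcol_spec l m e hb).1.1
      rw [h2]; omega
    · have hSr : rstop l m e r j₀ < r := by omega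
      have hnb := not_rbump_at l m e r j₀ hSr
      rw [← heq, show r - 1 - s = r - (s + 1) by omega] at hnb
      rw [h2, rcol_of_not l m e hnb]
      omega

lemma m_gt_at_landing (hlant : Antitone l)
    (hcol : ∀ i j, cellOf l m i j → cellOf l m (i + 1) j → e i j < e (i + 1) j)
    (hcell : cellOf l m r j₀) (h : rstop l m e r j₀ < r) :
    rpcol l m e r j₀ (rstop l m e r j₀) < m (r - 1 - rstop l m e r j₀) := by
  obtain ⟨hcB, hvB⟩ := cell_rpcol l m e r j₀ hcell (le_refl (rstop l m e r j₀))
  have hnb := not_rbump_at l m e r j₀ h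
  by_contra hh
  push_neg at hh
  have hjl : rpcol l m e r j₀ (rstop l m e r j₀) < l (r - 1 - rstop l m e r j₀) :=
    lt_of_lt_of_le hcB.2 (hlant (by omega : r - 1 - rstop l m e r j₀ ≤ r - rstop l m e r j₀))
  have hcb : cellOf l m (r - 1 - rstop l m e r j₀) (rpcol l m e r j₀ (rstop l m e r j₀)) := ⟨hh, hjl⟩
  have hst := hcol _ _ hcb
    (by rw [show r - 1 - rstop l m e r j₀ + 1 = r - rstop l m e r j₀ by omega]; exact hcB)
  rw [show r - 1 - rstop l m e r j₀ + 1 = r - rstop l m e r j₀ by omega] at hst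
  rw [← hvB] at hst
  exact hnb ⟨_, hcb, hst⟩

lemma rpcol_landing (h : rstop l m e r j₀ < r) :
    rpcol l m e r j₀ (rstop l m e r j₀ + 1) = m (r - 1 - rstop l m e r j₀) - 1 := by
  have hnb := not_rbump_at l m e r j₀ h
  have h2 : rpcol l m e r j₀ (rstop l m e r j₀ + 1) =
      rcol l m e (r - (rstop l m e r j₀ + 1)) (rvalF l m e r j₀ (rstop l m e r j₀)) := by
    simp [rpcol]
  rw [show r - 1 - rstop l m e r j₀ = r - (rstop l m e r j₀ + 1) by omega] at hnb ⊢
  rw [h2, rcol_of_not l m e hnb]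

lemma rinsShapeL_self : rinsShapeL l m e r j₀ r = l r - 1 := by
  simp [rinsShapeL]

lemma rinsShapeL_ne {i : ℕ} (h : i ≠ r) : rinsShapeL l m e r j₀ i = l i := by
  simp [rinsShapeL, Function.update_of_ne h]

lemma rinsShapeL_le (i : ℕ) : rinsShapeL l m e r j₀ i ≤ l i := by
  rcases eq_or_ne i r with h | h
  · rw [h, rinsShapeL_self]; omega
  · rw [rinsShapeL_ne l m e r j₀ h]

lemma rinsShapeM_ne {i : ℕ}
    (h : rstop l m e r j₀ = r ∨ i ≠ r - 1 - rstop l m e r j₀) :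
    rinsShapeM l m e r j₀ i = m i := by
  unfold rinsShapeM
  split
  · rfl
  · rcases h with h | h
    · omega
    · exact Function.update_of_ne h _ _

lemma rinsShapeM_at (h : rstop l m e r j₀ < r) :
    rinsShapeM l m e r j₀ (r - 1 - rstop l m e r j₀) = m (r - 1 - rstop l m e r j₀) - 1 := by
  unfold rinsShapeM
  rw [if_neg (by omega)]
  simp

lemma rinsShapeM_le (i : ℕ) : rinsShapeM l m e r j₀ i ≤ m i := by
  unfold rinsShapeM
  split
  · exact le_rfl
  · rcases eq_or_ne i (r - 1 - rstop l m e r j₀) with h | h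
    · rw [h, Function.update_self]; omega
    · rw [Function.update_of_ne h]

lemma rinsEntry_eq {i j : ℕ}
    (h : i ≤ r → r - i ≤ rlen l m e r j₀ → j ≠ rpcol l m e r j₀ (r - i)) :
    rinsEntry l m e r j₀ i j = e i j := by
  unfold rinsEntry
  rw [if_neg]
  rintro ⟨h1, h2, h3⟩
  exact h h1 h2 h3

lemma rinsEntry_path {s : ℕ} (hs : s ≤ rlen l m e r j₀) (hsr : s ≤ r) :
    rinsEntry l m e r j₀ (r - s) (rpcol l m e r j₀ s) =
      if s = 0 then 0 else rvalF l m e r j₀ (s - 1) := by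
  have h1 : r - (r - s) = s := by omega
  unfold rinsEntry
  rw [if_pos ⟨by omega, by rw [h1]; exact hs, by rw [h1]⟩, h1]

end Generic

lemma reverse_key (l m : ℕ → ℕ) (e : ℕ → ℕ → ℕ)
    (hl : IsPartition l) (hT : IsSSYTFilling l m e) (r j₀ r' j₀' : ℕ)
    (hc : IsOutsideCorner l m r j₀) (hc' : IsOutsideCorner l m r' j₀')
    (hlt : j₀ < j₀') :
    ∀ n,
      r - r' + n ≤
        rlen (rinsShapeL l m e r' j₀') (rinsShapeM l m e r' j₀') (rinsEntry l m e r' j₀') r j₀ →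
      n ≤ rlen l m e r' j₀' ∧
      rpcol (rinsShapeL l m e r' j₀') (rinsShapeM l m e r' j₀') (rinsEntry l m e r' j₀') r j₀
          (r - r' + n) < rpcol l m e r' j₀' n ∧
      (r - r' + n ≤
          rstop (rinsShapeL l m e r' j₀') (rinsShapeM l m e r' j₀') (rinsEntry l m e r' j₀') r j₀ →
        n ≤ rstop l m e r' j₀' ∧
        rvalF (rinsShapeL l m e r' j₀') (rinsShapeM l m e r' j₀') (rinsEntry l m e r' j₀') r j₀
            (r - r' + n) ≤ rvalF l m e r' j₀' n) := by
  obtain ⟨hpos, hzero, hrowW, hcolS⟩ := hT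
  obtain ⟨hcell', hj0', hnc'⟩ := hc'
  obtain ⟨hcellc, hj0, hncc⟩ := hc
  have hr'r : r' < r := by
    by_contra hh
    push_neg at hh
    have h1 := hl.1 hh
    omega
  set lA := rinsShapeL l m e r' j₀' with hlAdef
  set mA := rinsShapeM l m e r' j₀' with hmAdef
  set eA := rinsEntry l m e r' j₀' with heAdef
  have hS1r : rstop l m e r' j₀' ≤ r' := rstop_le_self l m e r' j₀'
  have hL1r : rlen l m e r' j₀' ≤ r' := rlen_le_self l m e r' j₀'
  have hS2r : rstop lA mA eA r j₀ ≤ r := rstop_le_self lA mA eA r j₀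
  have hL2r : rlen lA mA eA r j₀ ≤ r := rlen_le_self lA mA eA r j₀
  have hL1c := rlen_cases l m e r' j₀'
  have hL2c := rlen_cases lA mA eA r j₀
  have hlAr' : lA r' = j₀' := by rw [hlAdef, rinsShapeL_self]; omega
  have hlAne : ∀ i, i ≠ r' → lA i = l i := fun i h => by
    rw [hlAdef, rinsShapeL_ne l m e r' j₀' h]
  have hlAle : ∀ i, lA i ≤ l i := fun i => by
    rw [hlAdef]; exact rinsShapeL_le l m e r' j₀' i
  have hmAle : ∀ i, mA i ≤ m i := fun i => by
    rw [hmAdef]; exact rinsShapeM_le l m e r' j₀' i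
  have hmAne : ∀ i, (rstop l m e r' j₀' = r' ∨ i ≠ r' - rlen l m e r' j₀') → mA i = m i := by
    intro i h
    rw [hmAdef]
    apply rinsShapeM_ne
    rcases h with h | h
    · exact Or.inl h
    · rcases hL1c with ⟨h1, h2⟩ | ⟨h1, h2⟩
      · exact Or.inl h1
      · exact Or.inr (by omega)
  have hBS1m : rstop l m e r' j₀' < r' →
      rpcol l m e r' j₀' (rstop l m e r' j₀') < m (r' - rlen l m e r' j₀') := by
    intro h
    have h1 := m_gt_at_landing l m e r' j₀' hl.1 hcolS hcell' h
    rw [show r' - 1 - rstop l m e r' j₀' = r' - rlen l m e r' j₀' from by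
      rcases hL1c with ⟨h2, h3⟩ | ⟨h2, h3⟩ <;> omega] at h1
    exact h1
  have hBL1 : rstop l m e r' j₀' < r' →
      rpcol l m e r' j₀' (rlen l m e r' j₀') = m (r' - rlen l m e r' j₀') - 1 := by
    intro h
    rcases hL1c with ⟨h1, h2⟩ | ⟨h1, h2⟩
    · omega
    · rw [h2, rpcol_landing l m e r' j₀' h,
        show r' - 1 - rstop l m e r' j₀' = r' - (rstop l m e r' j₀' + 1) from by omega]
  have hmAi0 : rstop l m e r' j₀' < r' →
      mA (r' - rlen l m e r' j₀') = m (r' - rlen l m e r' j₀') - 1 := by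
    intro h
    rcases hL1c with ⟨h1, _⟩ | ⟨h1, h2⟩
    · omega
    · rw [hmAdef, show r' - rlen l m e r' j₀' = r' - 1 - rstop l m e r' j₀' from by omega]
      exact rinsShapeM_at l m e r' j₀' h
  have heAne : ∀ n j, n ≤ r' → j ≠ rpcol l m e r' j₀' n → eA (r' - n) j = e (r' - n) j := by
    intro n j hn hj
    rw [heAdef]
    apply rinsEntry_eq
    intro h1 h2
    rw [show r' - (r' - n) = n from by omega]
    exact hj
  have heApath : ∀ n, n ≤ rlen l m e r' j₀' →
      eA (r' - n) (rpcol l m e r' j₀' n) =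
        if n = 0 then 0 else rvalF l m e r' j₀' (n - 1) := by
    intro n hn
    rw [heAdef]
    exact rinsEntry_path l m e r' j₀' hn (by omega)
  have hcellA0 : cellOf lA mA r j₀ := by
    constructor
    · rw [hmAne r (Or.inr (by omega))]
      exact hcellc.1
    · rw [hlAne r (by omega)]
      exact hcellc.2
  have hmAr' : mA r' = m r' := by
    apply hmAne
    rcases hL1c with ⟨h1, _⟩ | ⟨h1, h2⟩
    · exact Or.inl h1
    · exact Or.inr (by omega)
  have hrow_ge : ∀ n j, 1 ≤ n → n ≤ rlen l m e r' j₀' → cellOf lA mA (r' - n) j →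
      rpcol l m e r' j₀' n ≤ j → rvalF l m e r' j₀' (n - 1) ≤ eA (r' - n) j := by
    intro n j hn1 hnL hcell hBj
    rcases eq_or_lt_of_le hBj with heq | hlt2
    · rw [← heq, heApath n hnL, if_neg (by omega)]
    · have hner' : r' - n ≠ r' := by omega
      have hjl : j < l (r' - n) := by
        have h2 := hcell.2
        rw [hlAne _ hner'] at h2
        exact h2
      have heq_e : eA (r' - n) j = e (r' - n) j := heAne n j (by omega) (by omega)
      by_cases hnS1 : n ≤ rstop l m e r' j₀'
      · have hmAm : mA (r' - n) = m (r' - n) := by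
          apply hmAne
          rcases hL1c with ⟨h1, _⟩ | ⟨h1, h2⟩
          · exact Or.inl h1
          · exact Or.inr (by omega)
        have hclm : cellOf l m (r' - n) j := ⟨by rw [← hmAm]; exact hcell.1, hjl⟩
        have hmax := rpcol_max l m e r' j₀' (s := n - 1) (by omega)
          (by rw [show r' - (n - 1 + 1) = r' - n from by omega]; exact hclm)
          (by rw [show n - 1 + 1 = n from by omega]; exact hlt2)
        rw [show r' - (n - 1 + 1) = r' - n from by omega] at hmax
        rw [heq_e]
        exact hmax
      · have hint : rstop l m e r' j₀' < r' := by
          rcases hL1c with ⟨h1, h2⟩ | ⟨h1, h2⟩ <;> omega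
        have hnL1 : n = rlen l m e r' j₀' := by
          rcases hL1c with ⟨h1, h2⟩ | ⟨h1, h2⟩ <;> omega
        have hB := hBL1 hint
        have hm1 := hBS1m hint
        have hBn : rpcol l m e r' j₀' n = m (r' - rlen l m e r' j₀') - 1 := by
          rw [hnL1]; exact hB
        have hclm : cellOf l m (r' - n) j := by
          constructor
          · rw [show r' - n = r' - rlen l m e r' j₀' from by omega]
            omega
          · exact hjl
        have hidx2 : r' - n = r' - 1 - rstop l m e r' j₀' := by omega
        have hidx3 : n - 1 = rstop l m e r' j₀' := by omega
        rw [heq_e]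
        by_contra hcon
        push_neg at hcon
        apply not_rbump_at l m e r' j₀' hint
        rw [hidx2] at hclm hcon
        rw [hidx3] at hcon
        exact ⟨j, hclm, hcon⟩
  intro n
  induction n with
  | zero =>
      intro hn
      simp only [Nat.add_zero] at hn ⊢
      have hrd : r - (r - r') = r' := by omega
      have hAd : rpcol lA mA eA r j₀ (r - r') =
          rcol lA mA eA (r - (r - r')) (rvalF lA mA eA r j₀ (r - r' - 1)) := by
        unfold rpcol
        rw [if_neg (by omega)]
      rw [hrd] at hAd
      have hB0 : rpcol l m e r' j₀' 0 = j₀' := by unfold rpcol; simp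
      have hAdlt : rpcol lA mA eA r j₀ (r - r') < j₀' := by
        by_cases hb : RBumpable lA mA eA r' (rvalF lA mA eA r j₀ (r - r' - 1))
        · have h2 := (rcol_spec lA mA eA hb).1.2
          rw [← hAd, hlAr'] at h2
          exact h2
        · rw [hAd, rcol_of_not lA mA eA hb, hmAr']
          have h3 := hcell'.1
          omega
      refine ⟨Nat.zero_le _, by rw [hB0]; exact hAdlt, ?_⟩
      intro hS
      obtain ⟨hcA, hvA⟩ := cell_rpcol lA mA eA r j₀ hcellA0 hS
      rw [hrd] at hcA hvA
      have hclm : cellOf l m r' (rpcol lA mA eA r j₀ (r - r')) := by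
        constructor
        · rw [← hmAr']; exact hcA.1
        · have h4 := hcA.2
          rw [hlAr'] at h4
          omega
      have heq2 : eA r' (rpcol lA mA eA r j₀ (r - r')) =
          e r' (rpcol lA mA eA r j₀ (r - r')) := by
        have h5 := heAne 0 (rpcol lA mA eA r j₀ (r - r')) (by omega) (by rw [hB0]; omega)
        simpa using h5
      have hV0 : rvalF l m e r' j₀' 0 = e r' j₀' := rfl
      refine ⟨Nat.zero_le _, ?_⟩
      rw [hvA, heq2, hV0]
      exact hrowW r' _ _ (le_of_lt hAdlt) hclm hcell'
  | succ n ih =>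
      intro hn
      have hpre : r - r' + n ≤ rlen lA mA eA r j₀ := by omega
      obtain ⟨ihL, ihAB, ihU⟩ := ih hpre
      have hstep : r - r' + n ≤ rstop lA mA eA r j₀ := by
        rcases hL2c with ⟨h1, h2⟩ | ⟨h1, h2⟩ <;> omega
      obtain ⟨hnS1, hUV⟩ := ihU hstep
      have hn1r' : n + 1 ≤ r' := by omega
      have hn1L1 : n + 1 ≤ rlen l m e r' j₀' := by
        rcases hL1c with ⟨h1, h2⟩ | ⟨h1, h2⟩ <;> omega
      have hrowt : r - (r - r' + (n + 1)) = r' - (n + 1) := by omega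
      obtain ⟨hcp, hvp⟩ := cell_rpcol lA mA eA r j₀ hcellA0 hstep
      rw [show r - (r - r' + n) = r' - n from by omega] at hcp hvp
      have hAt : rpcol lA mA eA r j₀ (r - r' + (n + 1)) =
          rcol lA mA eA (r' - (n + 1)) (rvalF lA mA eA r j₀ (r - r' + n)) := by
        unfold rpcol
        rw [if_neg (by omega), hrowt, show r - r' + (n + 1) - 1 = r - r' + n from by omega]
      have hmArow : mA (r' - n) = m (r' - n) := by
        apply hmAne
        rcases hL1c with ⟨h1, _⟩ | ⟨h1, h2⟩
        · exact Or.inl h1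
        · exact Or.inr (by omega)
      by_cases hb : RBumpable lA mA eA (r' - (n + 1)) (rvalF lA mA eA r j₀ (r - r' + n))
      · obtain ⟨hcb, heb⟩ := rcol_spec lA mA eA hb
        rw [← hAt] at hcb heb
        have hABlt : rpcol lA mA eA r j₀ (r - r' + (n + 1)) < rpcol l m e r' j₀' (n + 1) := by
          by_contra hge
          push_neg at hge
          have h6 := hrow_ge (n + 1) _ (by omega) hn1L1 hcb hge
          simp only [Nat.add_sub_cancel] at h6
          omega
        refine ⟨hn1L1, hABlt, ?_⟩
        intro htS2
        have hn1S1 : n + 1 ≤ rstop l m e r' j₀' := by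
          by_contra hgt
          push_neg at hgt
          have hint : rstop l m e r' j₀' < r' := by
            rcases hL1c with ⟨h1, h2⟩ | ⟨h1, h2⟩ <;> omega
          have hnL1' : n + 1 = rlen l m e r' j₀' := by
            rcases hL1c with ⟨h1, h2⟩ | ⟨h1, h2⟩ <;> omega
          have hBle : rpcol l m e r' j₀' (n + 1) ≤
              rpcol lA mA eA r j₀ (r - r' + (n + 1)) := by
            have h1 := hBL1 hint
            have h2 := hmAi0 hint
            have h3 := hcb.1
            rw [show r' - (n + 1) = r' - rlen l m e r' j₀' from by omega] at h3
            have h4 : rpcol l m e r' j₀' (n + 1) =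
                rpcol l m e r' j₀' (rlen l m e r' j₀') := by rw [hnL1']
            omega
          have h6 := hrow_ge (n + 1) _ (by omega) hn1L1 hcb hBle
          simp only [Nat.add_sub_cancel] at h6
          omega
        obtain ⟨hct, hvt⟩ := cell_rpcol lA mA eA r j₀ hcellA0 htS2
        rw [hrowt] at hct hvt
        have heq2 : eA (r' - (n + 1)) (rpcol lA mA eA r j₀ (r - r' + (n + 1))) =
            e (r' - (n + 1)) (rpcol lA mA eA r j₀ (r - r' + (n + 1))) :=
          heAne (n + 1) _ (by omega) (by omega)
        have hmArow1 : mA (r' - (n + 1)) = m (r' - (n + 1)) := by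
          apply hmAne
          rcases hL1c with ⟨h1, _⟩ | ⟨h1, h2⟩
          · exact Or.inl h1
          · exact Or.inr (by omega)
        have hclm : cellOf l m (r' - (n + 1)) (rpcol lA mA eA r j₀ (r - r' + (n + 1))) := by
          constructor
          · rw [← hmArow1]; exact hct.1
          · have h7 := hct.2
            rw [hlAne _ (by omega)] at h7
            exact h7
        obtain ⟨hcB1, hvB1⟩ := cell_rpcol l m e r' j₀' hcell' hn1S1
        refine ⟨hn1S1, ?_⟩
        rw [hvt, heq2, hvB1]
        exact hrowW (r' - (n + 1)) _ _ (le_of_lt hABlt) hclm hcB1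
      · have hS2eq : rstop lA mA eA r j₀ = r - r' + n := by
          rcases lt_or_eq_of_le hstep with h | h
          · exfalso
            have h8 := rbump_of_lt lA mA eA r j₀ h
            rw [show r - 1 - (r - r' + n) = r' - (n + 1) from by omega] at h8
            exact hb h8
          · omega
        have hAt2 : rpcol lA mA eA r j₀ (r - r' + (n + 1)) = mA (r' - (n + 1)) - 1 := by
          rw [hAt, rcol_of_not lA mA eA hb]
        have hnotcell : ¬ cellOf lA mA (r' - (n + 1)) (rpcol lA mA eA r j₀ (r - r' + n)) := by
          intro hcc
          apply hb
          refine ⟨rpcol lA mA eA r j₀ (r - r' + n), hcc, ?_⟩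
          have hBm : rpcol l m e r' j₀' n ≤ rpcol l m e r' j₀' (n + 1) :=
            rpcol_mono l m e r' j₀' hl.1 hcolS hcell' hn1L1
          have hcne : rpcol lA mA eA r j₀ (r - r' + n) ≠ rpcol l m e r' j₀' (n + 1) := by
            omega
          have heqlow : eA (r' - (n + 1)) (rpcol lA mA eA r j₀ (r - r' + n)) =
              e (r' - (n + 1)) (rpcol lA mA eA r j₀ (r - r' + n)) :=
            heAne (n + 1) _ (by omega) hcne
          have hequp : eA (r' - n) (rpcol lA mA eA r j₀ (r - r' + n)) =
              e (r' - n) (rpcol lA mA eA r j₀ (r - r' + n)) :=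
            heAne n _ (by omega) (by omega)
          have hcup : cellOf l m (r' - n) (rpcol lA mA eA r j₀ (r - r' + n)) := by
            constructor
            · rw [← hmArow]; exact hcp.1
            · have h2 := hcp.2
              rcases Nat.eq_zero_or_pos n with h0 | h0
              · rw [h0] at h2 ⊢
                simp only [Nat.sub_zero] at h2 ⊢
                rw [hlAr'] at h2
                omega
              · rw [hlAne _ (by omega)] at h2
                exact h2
          have hclow : cellOf l m (r' - (n + 1)) (rpcol lA mA eA r j₀ (r - r' + n)) := by
            constructor
            · rcases hL1c with ⟨h1, h2⟩ | ⟨h1, h2⟩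
              · rw [← hmAne _ (Or.inl h1)]; exact hcc.1
              · rcases eq_or_ne (r' - (n + 1)) (r' - rlen l m e r' j₀') with hrow0 | hrow0
                · have hBLe := hBL1 h1
                  have hge := hcc.1
                  rw [hrow0, hmAi0 h1] at hge
                  have h4 : rpcol l m e r' j₀' (n + 1) =
                      rpcol l m e r' j₀' (rlen l m e r' j₀') := by
                    rw [show n + 1 = rlen l m e r' j₀' from by omega]
                  rw [hrow0]
                  omega
                · rw [← hmAne _ (Or.inr hrow0)]; exact hcc.1
            · have h2 := hcc.2
              rw [hlAne _ (by omega)] at h2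
              exact h2
          have hstrict := hcolS _ _ hclow (by
            rw [show r' - (n + 1) + 1 = r' - n from by omega]; exact hcup)
          rw [show r' - (n + 1) + 1 = r' - n from by omega] at hstrict
          rw [heqlow, hvp, hequp]
          exact hstrict
        have hclAa : rpcol lA mA eA r j₀ (r - r' + n) < lA (r' - (n + 1)) := by
          have h1 := hcp.2
          have h2 := hlAle (r' - n)
          have h3 : l (r' - n) ≤ l (r' - (n + 1)) := hl.1 (by omega)
          have h4 : lA (r' - (n + 1)) = l (r' - (n + 1)) := hlAne _ (by omega)
          omega
        have hmgt : rpcol lA mA eA r j₀ (r - r' + n) < mA (r' - (n + 1)) := by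
          by_contra h
          push_neg at h
          exact hnotcell ⟨h, hclAa⟩
        have hBge : mA (r' - (n + 1)) ≤ rpcol l m e r' j₀' (n + 1) := by
          by_cases hn1S1 : n + 1 ≤ rstop l m e r' j₀'
          · obtain ⟨hcB1, _⟩ := cell_rpcol l m e r' j₀' hcell' hn1S1
            have h1 := hcB1.1
            have h2 := hmAle (r' - (n + 1))
            omega
          · have hint : rstop l m e r' j₀' < r' := by
              rcases hL1c with ⟨h1, h2⟩ | ⟨h1, h2⟩ <;> omega
            have hnL1' : n + 1 = rlen l m e r' j₀' := by
              rcases hL1c with ⟨h1, h2⟩ | ⟨h1, h2⟩ <;> omega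
            have h1 := hBL1 hint
            have h2 := hmAi0 hint
            have h4 : rpcol l m e r' j₀' (n + 1) =
                rpcol l m e r' j₀' (rlen l m e r' j₀') := by rw [hnL1']
            have h5 : mA (r' - (n + 1)) = mA (r' - rlen l m e r' j₀') := by
              rw [show r' - (n + 1) = r' - rlen l m e r' j₀' from by omega]
            omega
        refine ⟨hn1L1, by rw [hAt2]; omega, ?_⟩
        intro htS2
        exfalso
        omega
/-- **Bumping lemma for two reverse insertions.** Let `T` be a skew SSYT with
outside corners `c = (r, j₀)` and `c' = (r', j₀')`, `c` strictly left of `c'`.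
Perform first the reverse row insertion `T → c'` (final entry `k'`), then the
reverse row insertion from `c` on the result (final entry `k`).  Then the
reverse bumping path of the second is strictly left of that of the first in
every row they both occupy; and if both land in row 0 (externally) then
`k ≤ k'`. -/
theorem reverse_bumping (l m : ℕ → ℕ) (e : ℕ → ℕ → ℕ)
    (hl : IsPartition l) (hm : IsPartition m) (hml : SubShape m l)
    (hT : IsSSYTFilling l m e) (r j₀ r' j₀' : ℕ)
    (hc : IsOutsideCorner l m r j₀) (hc' : IsOutsideCorner l m r' j₀')
    (hlt : j₀ < j₀') :
    (∀ i a b,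
        (i, a) ∈ rbumpPath (rinsShapeL l m e r' j₀') (rinsShapeM l m e r' j₀')
          (rinsEntry l m e r' j₀') r j₀ →
        (i, b) ∈ rbumpPath l m e r' j₀' → a < b) ∧
    (LandsExternally l m e r' j₀' →
      LandsExternally (rinsShapeL l m e r' j₀') (rinsShapeM l m e r' j₀')
        (rinsEntry l m e r' j₀') r j₀ →
      finalEntry (rinsShapeL l m e r' j₀') (rinsShapeM l m e r' j₀')
        (rinsEntry l m e r' j₀') r j₀ ≤ finalEntry l m e r' j₀') := by
  have hr'r : r' < r := by
    obtain ⟨_, hj0, _⟩ := hc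
    obtain ⟨_, hj0', _⟩ := hc'
    by_contra hh
    push_neg at hh
    have h1 := hl.1 hh
    omega
  have hL1r := rlen_le_self l m e r' j₀'
  have hS1r := rstop_le_self l m e r' j₀'
  have hL2r := rlen_le_self (rinsShapeL l m e r' j₀') (rinsShapeM l m e r' j₀')
    (rinsEntry l m e r' j₀') r j₀
  have hS2r := rstop_le_self (rinsShapeL l m e r' j₀') (rinsShapeM l m e r' j₀')
    (rinsEntry l m e r' j₀') r j₀
  have hL1c := rlen_cases l m e r' j₀'
  have hL2c := rlen_cases (rinsShapeL l m e r' j₀') (rinsShapeM l m e r' j₀')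
    (rinsEntry l m e r' j₀') r j₀
  have hkey := reverse_key l m e hl hT r j₀ r' j₀' hc hc' hlt
  constructor
  · rintro i a b ⟨t, ht, hab⟩ ⟨s, hs, hab'⟩
    simp only [Prod.mk.injEq] at hab hab'
    obtain ⟨hi, ha⟩ := hab
    obtain ⟨hi', hb⟩ := hab'
    have hts : t = r - r' + s := by omega
    have hk := hkey s (by omega)
    rw [ha, hb, hts]
    exact hk.2.1
  · intro hx1 hx2
    unfold LandsExternally at hx1 hx2
    have hk := hkey r' (by omega)
    have h2 := (hk.2.2 (by omega)).2
    unfold finalEntry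
    rw [hx1, hx2]
    rw [show r - r' + r' = r from by omega] at h2
    exact h2
end
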